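/- arXiv:0910.4893 — 5 statements merged into one kernel-verified Lean document; each statement's English description precedes it below -/
import Mathlib

section
/- Let d ≥ 1, let Ω₁, …, Ω_d : ℝ → ℝ be continuous, fix j ∈ {1,…,d}, and let η : ℝ → ℝ be twice differentiable. For a smooth function u : ℝ × E → ℂ define (Lu)(t,x) = i ∂_t u(t,x) + ½ Δu(t,x) − ½ (∑_{k=1}^d Ω_k(t) x_k²) u(t,x) and (Au)(t,x) = η'(t) x_j u(t,x) + i η(t) ∂_j u(t,x). Then for every smooth u : ℝ × E → ℂ and all (t,x) ∈ ℝ × E, (L(Au))(t,x) − (A(Lu))(t,x) = i (η''(t) + Ω_j(t) η(t)) x_j u(t,x). In particular, L and A commute on smooth functions if and only if η'' + Ω_j η = 0 (whenever u is not identically zero). -/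
noncomputable section

open MeasureTheory Real Complex

/-- Euclidean space `ℝ^d`. -/
abbrev Esp (d : ℕ) := EuclideanSpace ℝ (Fin d)

/-- Partial derivative in the `j`-th space direction. -/
def sderiv {d : ℕ} (j : Fin d) (f : Esp d → ℂ) (x : Esp d) : ℂ :=
  fderiv ℝ f x (EuclideanSpace.single j 1)

/-- Spatial Laplacian: sum of the second partial derivatives. -/
def lap {d : ℕ} (f : Esp d → ℂ) (x : Esp d) : ℂ :=
  ∑ j, sderiv j (fun y => sderiv j f y) x

section Helpers

variable {H : Type*} [NormedAddCommGroup H] [NormedSpace ℝ H]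

lemma ContDiffTop.diffAt {f : H → ℂ} (hf : ContDiff ℝ (⊤:ℕ∞) f) (x : H) :
    DifferentiableAt ℝ f x :=
  (hf.differentiable (by simp)).differentiableAt

lemma contDiff_fderiv_apply {f : H → ℂ} (hf : ContDiff ℝ (⊤:ℕ∞) f) (v : H) :
    ContDiff ℝ (⊤:ℕ∞) (fun x => fderiv ℝ f x v) :=
  (hf.fderiv_right (m := (⊤:ℕ∞)) (by simp)).clm_apply contDiff_const

lemma fderiv_fderiv_apply {f : H → ℂ} (hf : ContDiff ℝ (⊤:ℕ∞) f) (x v w : H) :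
    fderiv ℝ (fun y => fderiv ℝ f y v) x w = fderiv ℝ (fderiv ℝ f) x w v := by
  rw [fderiv_clm_apply (((hf.fderiv_right (m := (⊤:ℕ∞)) (by simp)).differentiable (by simp) x))
    (differentiableAt_const v)]
  simp

lemma snd_symm {f : H → ℂ} (hf : ContDiff ℝ (⊤:ℕ∞) f) (x : H) (v w : H) :
    fderiv ℝ (fderiv ℝ f) x v w = fderiv ℝ (fderiv ℝ f) x w v :=
  (hf.contDiffAt.isSymmSndFDerivAt (by rw [minSmoothness_of_isRCLikeNormedField]; exact WithTop.coe_le_coe.mpr (le_top : (2:ℕ∞) ≤ ⊤))) v w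

end Helpers

section Slice

variable {d : ℕ}

lemma slice_hasFDerivAt {f : ℝ × Esp d → ℂ} {t : ℝ} {x : Esp d}
    (hf : DifferentiableAt ℝ f (t, x)) :
    HasFDerivAt (fun y => f (t, y))
      ((fderiv ℝ f (t, x)).comp ((0 : Esp d →L[ℝ] ℝ).prod (ContinuousLinearMap.id ℝ (Esp d)))) x :=
  hf.hasFDerivAt.comp x ((hasFDerivAt_const t x).prodMk (hasFDerivAt_id x))

lemma sderiv_slice {f : ℝ × Esp d → ℂ} {t : ℝ} {x : Esp d}
    (hf : DifferentiableAt ℝ f (t, x)) (j : Fin d) :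
    sderiv j (fun y => f (t, y)) x = fderiv ℝ f (t, x) (0, EuclideanSpace.single j 1) := by
  rw [sderiv, (slice_hasFDerivAt hf).fderiv]
  rfl

lemma timederiv_slice {f : ℝ × Esp d → ℂ} {t : ℝ} {x : Esp d}
    (hf : DifferentiableAt ℝ f (t, x)) :
    HasDerivAt (fun s => f (s, x)) (fderiv ℝ f (t, x) (1, 0)) t :=
  hf.hasFDerivAt.comp_hasDerivAt t ((hasDerivAt_id t).prodMk (hasDerivAt_const t x))

lemma contDiff_slice {f : ℝ × Esp d → ℂ} (hf : ContDiff ℝ (⊤:ℕ∞) f) (t : ℝ) :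
    ContDiff ℝ (⊤:ℕ∞) (fun y => f (t, y)) :=
  hf.comp (contDiff_const.prodMk contDiff_id)

end Slice

section Spatial

variable {d : ℕ}

lemma proj_coe (j : Fin d) : (⇑(EuclideanSpace.proj (𝕜:=ℝ) j) : Esp d → ℝ) = fun y => y j := by
  funext y; simp

lemma hasFDerivAt_coord (j : Fin d) (x : Esp d) :
    HasFDerivAt (fun y : Esp d => ((y j : ℝ) : ℂ))
      (Complex.ofRealCLM.comp (EuclideanSpace.proj j)) x := by
  have h := (EuclideanSpace.proj (𝕜:=ℝ) j).hasFDerivAt (x := x)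
  rw [proj_coe] at h
  exact Complex.ofRealCLM.hasFDerivAt.comp x h

lemma contDiff_coord (j : Fin d) : ContDiff ℝ (⊤:ℕ∞) (fun y : Esp d => ((y j : ℝ) : ℂ)) := by
  have := Complex.ofRealCLM.contDiff (n := (⊤:ℕ∞)).comp ((EuclideanSpace.proj (𝕜:=ℝ) j).contDiff)
  rwa [proj_coe] at this

lemma contDiff_sderiv {f : Esp d → ℂ} (hf : ContDiff ℝ (⊤:ℕ∞) f) (k : Fin d) :
    ContDiff ℝ (⊤:ℕ∞) (fun y => sderiv k f y) :=
  contDiff_fderiv_apply hf _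

lemma sderiv_comm {f : Esp d → ℂ} (hf : ContDiff ℝ (⊤:ℕ∞) f) (a b : Fin d) (x : Esp d) :
    sderiv a (fun y => sderiv b f y) x = sderiv b (fun y => sderiv a f y) x := by
  simp only [sderiv]
  rw [fderiv_fderiv_apply hf, fderiv_fderiv_apply hf]
  exact snd_symm hf x _ _

lemma contDiff_lap {f : Esp d → ℂ} (hf : ContDiff ℝ (⊤:ℕ∞) f) :
    ContDiff ℝ (⊤:ℕ∞) (fun y => lap f y) := by
  refine ContDiff.sum (fun k _ => ?_)
  exact contDiff_sderiv (contDiff_sderiv hf k) k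

lemma sderiv_fun_add {g h : Esp d → ℂ} {x : Esp d} (hg : DifferentiableAt ℝ g x)
    (hh : DifferentiableAt ℝ h x) (k : Fin d) :
    sderiv k (fun y => g y + h y) x = sderiv k g x + sderiv k h x := by
  simp [sderiv, fderiv_fun_add hg hh]

lemma sderiv_fun_sub {g h : Esp d → ℂ} {x : Esp d} (hg : DifferentiableAt ℝ g x)
    (hh : DifferentiableAt ℝ h x) (k : Fin d) :
    sderiv k (fun y => g y - h y) x = sderiv k g x - sderiv k h x := by
  simp [sderiv, fderiv_fun_sub hg hh]

lemma sderiv_const_mul {g : Esp d → ℂ} {x : Esp d} (hg : DifferentiableAt ℝ g x) (c : ℂ)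
    (k : Fin d) :
    sderiv k (fun y => c * g y) x = c * sderiv k g x := by
  simp [sderiv, fderiv_const_mul hg c]

lemma sderiv_fun_sum {ι : Type*} {s : Finset ι} {g : ι → Esp d → ℂ} {x : Esp d}
    (hg : ∀ i ∈ s, DifferentiableAt ℝ (g i) x) (k : Fin d) :
    sderiv k (fun y => ∑ i ∈ s, g i y) x = ∑ i ∈ s, sderiv k (g i) x := by
  simp [sderiv, fderiv_fun_sum hg]

lemma sderiv_coord_mul {g : Esp d → ℂ} {x : Esp d} (hg : DifferentiableAt ℝ g x) (j k : Fin d) :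
    sderiv k (fun y => ((y j : ℝ):ℂ) * g y) x
      = (if j = k then 1 else 0) * g x + ((x j : ℝ):ℂ) * sderiv k g x := by
  have h := (hasFDerivAt_coord j x).fun_mul hg.hasFDerivAt
  rw [sderiv, h.fderiv]
  simp [sderiv, EuclideanSpace.single_apply]
  split_ifs <;> push_cast <;> ring

lemma hasFDerivAt_V (c : Fin d → ℝ) (x : Esp d) :
    HasFDerivAt (fun y : Esp d => ((∑ k, c k * (y k)^2 : ℝ) : ℂ))
      (Complex.ofRealCLM.comp (∑ k, (2 * c k * x k) • EuclideanSpace.proj k)) x := by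
  have key : ∀ k : Fin d, HasFDerivAt (fun y : Esp d => c k * (y k)^2)
      ((2 * c k * x k) • EuclideanSpace.proj (𝕜:=ℝ) k) x := by
    intro k
    have h := (EuclideanSpace.proj (𝕜:=ℝ) k).hasFDerivAt (x := x)
    rw [proj_coe] at h
    have h2 := (h.fun_mul h).const_mul (c k)
    refine (h2.congr_fderiv ?_).congr_of_eventuallyEq (Filter.Eventually.of_forall fun y => ?_)
    · ext v
      simp only [ContinuousLinearMap.smul_apply, ContinuousLinearMap.add_apply, smul_eq_mul]
      ring
    · ring
  have hsum : HasFDerivAt (fun y : Esp d => ∑ k, c k * (y k)^2)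
      (∑ k, (2 * c k * x k) • EuclideanSpace.proj (𝕜:=ℝ) k) x :=
    HasFDerivAt.fun_sum (fun k _ => key k)
  exact Complex.ofRealCLM.hasFDerivAt.comp x hsum

lemma sderiv_V_mul (c : Fin d → ℝ) {g : Esp d → ℂ} {x : Esp d}
    (hg : DifferentiableAt ℝ g x) (k : Fin d) :
    sderiv k (fun y => ((∑ i, c i * (y i)^2 : ℝ):ℂ) * g y) x
      = ((2 * c k * x k : ℝ):ℂ) * g x + ((∑ i, c i * (x i)^2 : ℝ):ℂ) * sderiv k g x := by
  have h := (hasFDerivAt_V c x).fun_mul hg.hasFDerivAt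
  have hS : ((∑ i, (2 * c i * x i) • EuclideanSpace.proj (𝕜:=ℝ) i) (EuclideanSpace.single k 1)) = 2 * c k * x k := by
    rw [ContinuousLinearMap.sum_apply, Finset.sum_eq_single k]
    · simp [EuclideanSpace.single_apply]
    · intro b _ hb
      simp [EuclideanSpace.single_apply, hb]
    · simp
  rw [sderiv, h.fderiv]
  simp only [ContinuousLinearMap.add_apply, ContinuousLinearMap.smul_apply,
    ContinuousLinearMap.comp_apply, hS, Complex.ofRealCLM_apply, smul_eq_mul,
    Complex.real_smul, sderiv]
  push_cast
  ring

lemma contDiff_V (c : Fin d → ℝ) :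
    ContDiff ℝ (⊤:ℕ∞) (fun y : Esp d => ((∑ i, c i * (y i)^2 : ℝ):ℂ)) := by
  have hc : ∀ k : Fin d, ContDiff ℝ (⊤:ℕ∞) (fun y : Esp d => c k * (y k)^2) := by
    intro k
    have hp : ContDiff ℝ (⊤:ℕ∞) (fun y : Esp d => y k) := by
      have := (EuclideanSpace.proj (𝕜:=ℝ) k).contDiff (n := (⊤:ℕ∞))
      rwa [proj_coe] at this
    exact contDiff_const.mul (hp.pow 2)
  have hsum : ContDiff ℝ (⊤:ℕ∞) (fun y : Esp d => ∑ i, c i * (y i)^2) :=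
    ContDiff.sum (fun k _ => hc k)
  exact (Complex.ofRealCLM.contDiff (n := (⊤:ℕ∞))).comp hsum

end Spatial

section LapA

variable {d : ℕ}

lemma lap_Aslice {f : Esp d → ℂ} (hf : ContDiff ℝ (⊤:ℕ∞) f) (c1 c2 : ℂ) (j : Fin d) (x : Esp d) :
    lap (fun y => c1 * ((y j : ℝ):ℂ) * f y + c2 * sderiv j f y) x
      = c1 * (2 * sderiv j f x + ((x j : ℝ):ℂ) * lap f x) + c2 * sderiv j (fun y => lap f y) x := by
  classical
  have hfd : ∀ y, DifferentiableAt ℝ f y := fun y => ContDiffTop.diffAt hf y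
  have hs : ∀ k : Fin d, ContDiff ℝ (⊤:ℕ∞) (fun y => sderiv k f y) := fun k => contDiff_sderiv hf k
  have hss : ∀ a b : Fin d, ContDiff ℝ (⊤:ℕ∞) (fun y => sderiv a (fun z => sderiv b f z) y) :=
    fun a b => contDiff_sderiv (hs b) a
  have hcoordf : ∀ y, DifferentiableAt ℝ (fun z => ((z j : ℝ):ℂ) * f z) y :=
    fun y => ((hasFDerivAt_coord j y).mul (hfd y).hasFDerivAt).differentiableAt
  have step1 : ∀ (k : Fin d) (y : Esp d),
      sderiv k (fun z => c1 * ((z j : ℝ):ℂ) * f z + c2 * sderiv j f z) y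
        = c1 * ((if j = k then 1 else 0) * f y + ((y j : ℝ):ℂ) * sderiv k f y)
          + c2 * sderiv k (fun z => sderiv j f z) y := by
    intro k y
    have e1 : (fun z => c1 * ((z j : ℝ):ℂ) * f z + c2 * sderiv j f z)
        = fun z => c1 * (((z j : ℝ):ℂ) * f z) + c2 * sderiv j f z := by
      funext z; ring
    rw [e1, sderiv_fun_add ((hcoordf y).const_mul c1) ((ContDiffTop.diffAt (hs j) y).const_mul c2) k,
      sderiv_const_mul (hcoordf y) c1 k, sderiv_const_mul (ContDiffTop.diffAt (hs j) y) c2 k,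
      sderiv_coord_mul (hfd y) j k]
  have step2 : ∀ k : Fin d,
      sderiv k (fun y => sderiv k (fun z => c1 * ((z j : ℝ):ℂ) * f z + c2 * sderiv j f z) y) x
        = c1 * ((if j = k then 1 else 0) * sderiv k f x
            + ((if j = k then 1 else 0) * sderiv k f x + ((x j : ℝ):ℂ) * sderiv k (fun z => sderiv k f z) x))
          + c2 * sderiv j (fun y => sderiv k (fun z => sderiv k f z) y) x := by
    intro k
    have e2 : (fun y => sderiv k (fun z => c1 * ((z j : ℝ):ℂ) * f z + c2 * sderiv j f z) y)
        = fun y => c1 * ((if j = k then 1 else 0) * f y + ((y j : ℝ):ℂ) * sderiv k f y)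
            + c2 * sderiv j (fun z => sderiv k f z) y := by
      funext y
      rw [step1 k y, sderiv_comm hf k j y]
    rw [e2]
    have hA : DifferentiableAt ℝ
        (fun y => (if j = k then (1:ℂ) else 0) * f y + ((y j : ℝ):ℂ) * sderiv k f y) x :=
      ((hfd x).const_mul _).add
        ((hasFDerivAt_coord j x).mul (ContDiffTop.diffAt (hs k) x).hasFDerivAt).differentiableAt
    have hB : DifferentiableAt ℝ (fun y => sderiv j (fun z => sderiv k f z) y) x :=
      ContDiffTop.diffAt (hss j k) x
    rw [sderiv_fun_add (hA.const_mul c1) (hB.const_mul c2) k,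
      sderiv_const_mul hA c1 k, sderiv_const_mul hB c2 k,
      sderiv_fun_add ((hfd x).const_mul _)
        (((hasFDerivAt_coord j x).fun_mul (ContDiffTop.diffAt (hs k) x).hasFDerivAt).differentiableAt) k,
      sderiv_const_mul (hfd x) _ k,
      sderiv_coord_mul (ContDiffTop.diffAt (hs k) x) j k,
      sderiv_comm (hs k) k j x]
  have main : lap (fun y => c1 * ((y j : ℝ):ℂ) * f y + c2 * sderiv j f y) x
      = ∑ k, (c1 * ((if j = k then 1 else 0) * sderiv k f x
            + ((if j = k then 1 else 0) * sderiv k f x + ((x j : ℝ):ℂ) * sderiv k (fun z => sderiv k f z) x))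
          + c2 * sderiv j (fun y => sderiv k (fun z => sderiv k f z) y) x) :=
    Finset.sum_congr rfl (fun k _ => step2 k)
  have hsum3 : ∑ k, sderiv j (fun y => sderiv k (fun z => sderiv k f z) y) x
      = sderiv j (fun y => lap f y) x := by
    rw [← sderiv_fun_sum (fun k _ => ContDiffTop.diffAt (hss k k) x) j]
    rfl
  rw [main, Finset.sum_add_distrib, ← Finset.mul_sum, ← Finset.mul_sum, hsum3]
  congr 1
  rw [Finset.sum_add_distrib, Finset.sum_add_distrib, ← Finset.mul_sum]
  have hlapf : lap f x = ∑ k, sderiv k (fun z => sderiv k f z) x := rfl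
  simp only [ite_mul, one_mul, zero_mul, Finset.sum_ite_eq, Finset.mem_univ, if_true]
  rw [← hlapf]
  ring

end LapA

/-- The linear Schrödinger operator with time-dependent anisotropic harmonic potential:
`(Lu)(t,x) = i ∂ₜu + ½ Δu − ½ (∑ₖ Ωₖ(t) xₖ²) u`. -/
def Lop {d : ℕ} (Ω : Fin d → ℝ → ℝ) (u : ℝ → Esp d → ℂ) (t : ℝ) (x : Esp d) : ℂ :=
  Complex.I * deriv (fun s => u s x) t + (1 / 2) * lap (u t) x
    - (1 / 2) * (((∑ k, Ω k t * (x k) ^ 2 : ℝ)) : ℂ) * u t x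

/-- The vector field `(Au)(t,x) = η'(t) xⱼ u + i η(t) ∂ⱼu`. -/
def Aop {d : ℕ} (η : ℝ → ℝ) (j : Fin d) (u : ℝ → Esp d → ℂ) (t : ℝ) (x : Esp d) : ℂ :=
  ((deriv η t : ℝ) : ℂ) * ((x j : ℝ) : ℂ) * u t x + Complex.I * ((η t : ℝ) : ℂ) * sderiv j (u t) x

/-- Commutator identity: `[L, A] u = i (η'' + Ω_j η) x_j u` for smooth `u`. -/
theorem commutator_identity
    (d : ℕ) (hd : 1 ≤ d) (Ω : Fin d → ℝ → ℝ) (hΩ : ∀ k, Continuous (Ω k))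
    (j : Fin d) (η : ℝ → ℝ)
    (hη : Differentiable ℝ η) (hη' : Differentiable ℝ (deriv η))
    (u : ℝ → Esp d → ℂ) (hu : ContDiff ℝ (⊤ : ℕ∞) (Function.uncurry u)) :
    ∀ (t : ℝ) (x : Esp d),
      Lop Ω (Aop η j u) t x - Aop η j (Lop Ω u) t x
        = Complex.I * (((deriv (deriv η) t + Ω j t * η t : ℝ)) : ℂ)
            * ((x j : ℝ) : ℂ) * u t x := by
  intro t x
  classical
  have hF : ContDiff ℝ (⊤:ℕ∞) (Function.uncurry u) := hu.of_le (by simp)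
  have hT : ContDiff ℝ (⊤:ℕ∞)
      (fun p : ℝ × Esp d => fderiv ℝ (Function.uncurry u) p (1, 0)) :=
    contDiff_fderiv_apply hF _
  have hG : ContDiff ℝ (⊤:ℕ∞)
      (fun p : ℝ × Esp d => fderiv ℝ (Function.uncurry u) p (0, EuclideanSpace.single j 1)) :=
    contDiff_fderiv_apply hF _
  have hf : ContDiff ℝ (⊤:ℕ∞) (u t) := contDiff_slice hF t
  -- time derivative of u
  have hderiv_u : ∀ (s : ℝ) (y : Esp d),
      HasDerivAt (fun s' => u s' y) (fderiv ℝ (Function.uncurry u) (s, y) (1, 0)) s :=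
    fun s y => timederiv_slice (ContDiffTop.diffAt hF (s, y))
  -- spatial derivative of u expressed through the full fderiv
  have hGslice : ∀ s : ℝ, sderiv j (u s) x
      = fderiv ℝ (Function.uncurry u) (s, x) (0, EuclideanSpace.single j 1) :=
    fun s => sderiv_slice (ContDiffTop.diffAt hF (s, x)) j
  -- time derivative of the spatial derivative
  have hGd : HasDerivAt
      (fun s => fderiv ℝ (Function.uncurry u) (s, x) (0, EuclideanSpace.single j 1))
      (fderiv ℝ (fun p : ℝ × Esp d =>
        fderiv ℝ (Function.uncurry u) p (0, EuclideanSpace.single j 1)) (t, x) (1, 0)) t :=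
    timederiv_slice (ContDiffTop.diffAt hG (t, x))
  -- symmetry of mixed partials
  have mix : fderiv ℝ (fun p : ℝ × Esp d =>
        fderiv ℝ (Function.uncurry u) p (0, EuclideanSpace.single j 1)) (t, x) (1, 0)
      = sderiv j (fun y => fderiv ℝ (Function.uncurry u) (t, y) (1, 0)) x := by
    rw [sderiv_slice (ContDiffTop.diffAt hT (t, x)) j,
      fderiv_fderiv_apply hF, fderiv_fderiv_apply hF]
    exact snd_symm hF (t, x) _ _
  -- derivatives of η
  have hηd : HasDerivAt (fun s => ((deriv η s : ℝ):ℂ)) ((deriv (deriv η) t : ℝ):ℂ) t :=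
    ((hη' t).hasDerivAt).ofReal_comp
  have hηcd : HasDerivAt (fun s => ((η s : ℝ):ℂ)) ((deriv η t : ℝ):ℂ) t :=
    ((hη t).hasDerivAt).ofReal_comp
  -- Piece 1 : time derivative of A u
  have hAfun : (fun s => Aop η j u s x)
      = fun s => ((deriv η s : ℝ):ℂ) * ((x j : ℝ):ℂ) * u s x
          + Complex.I * ((η s : ℝ):ℂ)
            * (fderiv ℝ (Function.uncurry u) (s, x) (0, EuclideanSpace.single j 1)) := by
    funext s
    rw [Aop, hGslice s]
  have hAd := ((hηd.mul_const ((x j : ℝ):ℂ)).fun_mul (hderiv_u t x)).fun_add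
    ((hηcd.const_mul Complex.I).fun_mul hGd)
  rw [← hAfun] at hAd
  have P1 := hAd.deriv
  -- Piece 2 : Laplacian of A u
  have P2 : lap (Aop η j u t) x
      = ((deriv η t : ℝ):ℂ) * (2 * sderiv j (u t) x + ((x j : ℝ):ℂ) * lap (u t) x)
        + Complex.I * ((η t : ℝ):ℂ) * sderiv j (fun y => lap (u t) y) x := by
    have := lap_Aslice hf ((deriv η t : ℝ):ℂ) (Complex.I * ((η t : ℝ):ℂ)) j x
    rw [mul_assoc] at this ⊢
    exact this
  -- Piece 4 : value of L u
  have P4 : Lop Ω u t x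
      = Complex.I * (fderiv ℝ (Function.uncurry u) (t, x) (1, 0)) + (1 / 2) * lap (u t) x
        - (1 / 2) * (((∑ k, Ω k t * (x k) ^ 2 : ℝ)) : ℂ) * u t x := by
    rw [Lop, (hderiv_u t x).deriv]
  -- Piece 5 : spatial derivative of L u
  have hLfun : (Lop Ω u t)
      = fun y => Complex.I * (fderiv ℝ (Function.uncurry u) (t, y) (1, 0))
          + (1 / 2 : ℂ) * lap (u t) y
          - (1 / 2 : ℂ) * ((((∑ k, Ω k t * (y k) ^ 2 : ℝ)) : ℂ) * u t y) := by
    funext y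
    rw [Lop, (hderiv_u t y).deriv]
    ring
  have h1 : DifferentiableAt ℝ
      (fun y => Complex.I * (fderiv ℝ (Function.uncurry u) (t, y) (1, 0))) x :=
    (ContDiffTop.diffAt (contDiff_slice hT t) x).const_mul _
  have h2 : DifferentiableAt ℝ (fun y => (1 / 2 : ℂ) * lap (u t) y) x :=
    (ContDiffTop.diffAt (contDiff_lap hf) x).const_mul _
  have hVu : DifferentiableAt ℝ
      (fun y => ((((∑ k, Ω k t * (y k) ^ 2 : ℝ)) : ℂ)) * u t y) x :=
    ((hasFDerivAt_V (fun k => Ω k t) x).mul (ContDiffTop.diffAt hf x).hasFDerivAt).differentiableAt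
  have P5 : sderiv j (Lop Ω u t) x
      = Complex.I * sderiv j (fun y => fderiv ℝ (Function.uncurry u) (t, y) (1, 0)) x
        + (1 / 2 : ℂ) * sderiv j (fun y => lap (u t) y) x
        - (1 / 2 : ℂ) * (((2 * Ω j t * x j : ℝ):ℂ) * u t x
            + (((∑ i, Ω i t * (x i) ^ 2 : ℝ)):ℂ) * sderiv j (u t) x) := by
    rw [hLfun, sderiv_fun_sub (h1.fun_add h2) (hVu.const_mul (1/2 : ℂ)) j,
      sderiv_fun_add h1 h2 j,
      sderiv_const_mul (ContDiffTop.diffAt (contDiff_slice hT t) x) Complex.I j,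
      sderiv_const_mul (ContDiffTop.diffAt (contDiff_lap hf) x) (1/2 : ℂ) j,
      sderiv_const_mul hVu (1/2 : ℂ) j,
      sderiv_V_mul (fun k => Ω k t) (ContDiffTop.diffAt hf x) j]
  -- assemble
  calc Lop Ω (Aop η j u) t x - Aop η j (Lop Ω u) t x
      = (Complex.I * deriv (fun s => Aop η j u s x) t + (1 / 2) * lap (Aop η j u t) x
          - (1 / 2) * (((∑ k, Ω k t * (x k) ^ 2 : ℝ)) : ℂ)
            * (((deriv η t : ℝ) : ℂ) * ((x j : ℝ) : ℂ) * u t x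
                + Complex.I * ((η t : ℝ) : ℂ) * sderiv j (u t) x))
        - (((deriv η t : ℝ) : ℂ) * ((x j : ℝ) : ℂ) * Lop Ω u t x
            + Complex.I * ((η t : ℝ) : ℂ) * sderiv j (Lop Ω u t) x) := rfl
    _ = Complex.I * (((deriv (deriv η) t + Ω j t * η t : ℝ)) : ℂ)
            * ((x j : ℝ) : ℂ) * u t x := by
        rw [P1, P2, P4, P5, mix, hGslice t]
        push_cast
        linear_combination (((deriv η t : ℝ) : ℂ)
          * (fderiv ℝ (Function.uncurry u) (t, x)) (0, EuclideanSpace.single j 1))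
          * Complex.I_sq
end
end

section
/- Generalized lens transform. Let d ≥ 1, σ > 0, let Ω : ℝ → ℝ and H : ℝ → ℝ be continuous, and let μ, ν be fundamental solutions at 0 of y'' + Ω y = 0. Let I ⊆ ℝ be an open interval containing 0 on which ν(t) > 0. Let v : ℝ × E → ℂ be smooth and satisfy i ∂_t v(t,x) + ½ Δv(t,x) = H(t) |v(t,x)|^{2σ} v(t,x) for all (t,x) ∈ ℝ × E. Define, for t ∈ I and x ∈ E, u(t,x) = ν(t)^{−d/2} · v( μ(t)/ν(t), x/ν(t) ) · exp( i (ν'(t)/ν(t)) |x|²/2 ). Then for all t ∈ I and x ∈ E, i ∂_t u(t,x) + ½ Δu(t,x) = ½ Ω(t) |x|² u(t,x) + h(t) |u(t,x)|^{2σ} u(t,x), where h(t) = ν(t)^{dσ−2} H( μ(t)/ν(t) ). -/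
noncomputable section

open MeasureTheory Real Complex

variable {d : ℕ}

/-- complexified squared norm -/
def qC (x : Esp d) : ℂ := ((‖x‖^(2:ℕ) : ℝ) : ℂ)

lemma hasFDerivAt_qC (x : Esp d) :
    HasFDerivAt (qC (d := d))
      (Complex.ofRealCLM.comp ((2:ℝ) • (innerSL ℝ x))) x := by
  have h1 : HasFDerivAt (fun y : Esp d => (inner ℝ y y : ℝ)) ((2:ℝ) • innerSL ℝ x) x := by
    have h := (hasFDerivAt_id (𝕜 := ℝ) x).inner ℝ (hasFDerivAt_id x)
    refine h.congr_fderiv ?_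
    ext z
    simp [real_inner_comm, two_smul, mul_comm]
  have h2 : (fun y : Esp d => (‖y‖^(2:ℕ) : ℝ)) = fun y => (inner ℝ y y : ℝ) := by
    funext y; rw [real_inner_self_eq_norm_sq]
  have h3 : HasFDerivAt (fun y : Esp d => (‖y‖^(2:ℕ) : ℝ)) ((2:ℝ) • innerSL ℝ x) x := h2 ▸ h1
  exact (Complex.ofRealCLM.hasFDerivAt.comp x h3)

lemma qC_deriv_apply (x z : Esp d) :
    (Complex.ofRealCLM.comp ((2:ℝ) • (innerSL ℝ x))) z = 2 * ((inner ℝ x z : ℝ) : ℂ) := by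
  simp [two_smul]; ring

lemma fderiv_lens_spatial (w : Esp d → ℂ) (hw : Differentiable ℝ w) (A : ℂ) (c g : ℝ) (x z : Esp d) :
    fderiv ℝ (fun y => A * w (c • y) * Complex.exp (I * (g:ℂ) * qC y / 2)) x z
      = (A * ((c:ℂ) * fderiv ℝ w (c • x) z)
         + A * w (c • x) * (I * (g:ℂ) * ((inner ℝ x z : ℝ) : ℂ))) *
        Complex.exp (I * (g:ℂ) * qC x / 2) := by
  have hL : HasFDerivAt (fun y : Esp d => c • y) (c • ContinuousLinearMap.id ℝ (Esp d)) x :=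
    (c • ContinuousLinearMap.id ℝ (Esp d)).hasFDerivAt
  have hW : HasFDerivAt (fun y : Esp d => w (c • y))
      ((fderiv ℝ w (c • x)).comp (c • ContinuousLinearMap.id ℝ (Esp d))) x :=
    (hw (c • x)).hasFDerivAt.comp x hL
  have hE := ((hasFDerivAt_qC x).const_mul (I*(g:ℂ)/2)).cexp
  have hF := (hW.const_mul A).mul hE
  have hfun : (fun y : Esp d => A * w (c • y) * Complex.exp (I * (g:ℂ) * qC y / 2))
      = fun y : Esp d => A * w (c • y) * Complex.exp (I * (g:ℂ) / 2 * qC y) := by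
    funext y; ring_nf
  have hexp : Complex.exp (I * (g:ℂ) * qC x / 2) = Complex.exp (I * (g:ℂ) / 2 * qC x) := by
    ring_nf
  erw [hfun, hexp, hF.fderiv]
  simp [qC_deriv_apply, Complex.real_smul, smul_eq_mul]
  ring

lemma sderiv2_lens (w : Esp d → ℂ) (hw : ContDiff ℝ (⊤ : ℕ∞) w) (A : ℂ) (c g : ℝ) (x : Esp d) (j : Fin d) :
    sderiv j (fun y => sderiv j (fun y' => A * w (c • y') * Complex.exp (I * (g:ℂ) * qC y' / 2)) y) x
      = (A * (c:ℂ)^2 * sderiv j (fun y => sderiv j w y) (c • x)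
         + 2 * A * (c:ℂ) * (I * (g:ℂ) * ((x j : ℝ) : ℂ)) * (fderiv ℝ w (c • x) (EuclideanSpace.single j 1))
         + A * (I * (g:ℂ)) * w (c • x)
         + A * (I * (g:ℂ) * ((x j : ℝ) : ℂ))^2 * w (c • x)) * Complex.exp (I * (g:ℂ) * qC x / 2) := by
  set w1 : Esp d → ℂ := fun z => fderiv ℝ w z (EuclideanSpace.single j 1) with hw1def
  have hw1 : ContDiff ℝ (⊤ : ℕ∞) w1 := (hw.fderiv_right (by simp)).clm_apply contDiff_const
  have hrw : (fun y => sderiv j (fun y' => A * w (c • y') * Complex.exp (I * (g:ℂ) * qC y' / 2)) y)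
      = fun y => (A * (c:ℂ) * w1 (c • y) + A * (I * (g:ℂ)) * (w (c • y) * ((y j : ℝ) : ℂ)))
          * Complex.exp (I * (g:ℂ) / 2 * qC y) := by
    funext y
    rw [sderiv, fderiv_lens_spatial w (hw.differentiable (by simp)) A c g y (EuclideanSpace.single j 1)]
    rw [EuclideanSpace.inner_single_right]
    simp only [conj_trivial, one_mul]
    ring_nf
    simp only [hw1def]
    ring
  rw [sderiv, hrw]
  -- build HasFDerivAt for the explicit function
  have hL : HasFDerivAt (fun y : Esp d => c • y) (c • ContinuousLinearMap.id ℝ (Esp d)) x :=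
    (c • ContinuousLinearMap.id ℝ (Esp d)).hasFDerivAt
  have hW1 : HasFDerivAt (fun y : Esp d => w1 (c • y))
      ((fderiv ℝ w1 (c • x)).comp (c • ContinuousLinearMap.id ℝ (Esp d))) x :=
    ((hw1.differentiable (by simp)) (c • x)).hasFDerivAt.comp x hL
  have hW : HasFDerivAt (fun y : Esp d => w (c • y))
      ((fderiv ℝ w (c • x)).comp (c • ContinuousLinearMap.id ℝ (Esp d))) x :=
    ((hw.differentiable (by simp)) (c • x)).hasFDerivAt.comp x hL
  have hcoord : HasFDerivAt (fun y : Esp d => ((y j : ℝ) : ℂ))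
      (Complex.ofRealCLM.comp (EuclideanSpace.proj (𝕜 := ℝ) j)) x :=
    (Complex.ofRealCLM.comp (EuclideanSpace.proj (𝕜 := ℝ) j)).hasFDerivAt
  have hE := ((hasFDerivAt_qC x).const_mul (I*(g:ℂ)/2)).cexp
  have hS := ((hW1.const_mul (A * (c:ℂ))).add ((hW.mul hcoord).const_mul (A * (I * (g:ℂ))))).mul hE
  erw [hS.fderiv]
  have hval : fderiv ℝ w1 (c • x) (c • EuclideanSpace.single j (1:ℝ))
      = c • sderiv j (fun y => sderiv j w y) (c • x) := by
    rw [(fderiv ℝ w1 (c • x)).map_smul]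
    rfl
  simp only [ContinuousLinearMap.add_apply, ContinuousLinearMap.smul_apply,
    ContinuousLinearMap.comp_apply, ContinuousLinearMap.coe_smul', Pi.smul_apply,
    ContinuousLinearMap.coe_id', id_eq, qC_deriv_apply, PiLp.proj_apply,
    innerSL_apply_apply, EuclideanSpace.inner_single_right, EuclideanSpace.single_apply,
    (fderiv ℝ w (c • x)).map_smul, conj_trivial, one_mul, hval,
    Complex.real_smul, smul_eq_mul, Complex.ofRealCLM_apply, Pi.add_apply, Pi.mul_apply]
  push_cast
  ring_nf
  simp only [hw1def]
  ring

lemma esp_sum_single (x : Esp d) : ∑ j, (x j) • EuclideanSpace.single j (1:ℝ) = x := by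
  have h := (EuclideanSpace.basisFun (Fin d) ℝ).toBasis.sum_repr x
  simpa [EuclideanSpace.basisFun_apply, EuclideanSpace.basisFun_repr] using h

lemma esp_normsq_sum (x : Esp d) : (‖x‖^(2:ℕ) : ℝ) = ∑ j, (x j)^2 := by
  rw [EuclideanSpace.norm_eq, Real.sq_sqrt (by positivity)]
  simp [sq_abs]

lemma clm_sum_apply (L : Esp d →L[ℝ] ℂ) (x : Esp d) :
    ∑ j, ((x j : ℝ) : ℂ) * L (EuclideanSpace.single j 1) = L x := by
  conv_rhs => rw [← esp_sum_single x]
  rw [map_sum]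
  refine Finset.sum_congr rfl fun j _ => ?_
  rw [L.map_smul, Complex.real_smul]

lemma lap_lens (w : Esp d → ℂ) (hw : ContDiff ℝ (⊤ : ℕ∞) w) (A : ℂ) (c g : ℝ) (x : Esp d) :
    lap (fun y' => A * w (c • y') * Complex.exp (I * (g:ℂ) * qC y' / 2)) x
      = (A * (c:ℂ)^2 * lap w (c • x)
         + 2 * A * (c:ℂ) * (I * (g:ℂ)) * (fderiv ℝ w (c • x) x)
         + A * (I * (g:ℂ)) * (d:ℂ) * w (c • x)
         - A * (g:ℂ)^2 * qC x * w (c • x)) * Complex.exp (I * (g:ℂ) * qC x / 2) := by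
  rw [lap]
  rw [Finset.sum_congr rfl fun j _ => sderiv2_lens w hw A c g x j]
  rw [← Finset.sum_mul]
  congr 1
  have h1 : ∑ j, (A * (c:ℂ)^2 * sderiv j (fun y => sderiv j w y) (c • x)
         + 2 * A * (c:ℂ) * (I * (g:ℂ) * ((x j : ℝ) : ℂ)) * (fderiv ℝ w (c • x) (EuclideanSpace.single j 1))
         + A * (I * (g:ℂ)) * w (c • x)
         + A * (I * (g:ℂ) * ((x j : ℝ) : ℂ))^2 * w (c • x))
      = A * (c:ℂ)^2 * (∑ j, sderiv j (fun y => sderiv j w y) (c • x))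
        + 2 * A * (c:ℂ) * (I * (g:ℂ)) * (∑ j, ((x j : ℝ) : ℂ) * fderiv ℝ w (c • x) (EuclideanSpace.single j 1))
        + (d:ℂ) * (A * (I * (g:ℂ)) * w (c • x))
        - A * (g:ℂ)^2 * (∑ j, ((x j : ℝ) : ℂ)^2) * w (c • x) := by
    rw [Finset.sum_add_distrib, Finset.sum_add_distrib, Finset.sum_add_distrib,
      Finset.sum_const, Finset.card_univ, Fintype.card_fin, nsmul_eq_mul,
      ← Finset.mul_sum]
    have : ∀ j : Fin d, 2 * A * (c:ℂ) * (I * (g:ℂ) * ((x j : ℝ) : ℂ)) * (fderiv ℝ w (c • x) (EuclideanSpace.single j 1))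
        = 2 * A * (c:ℂ) * (I * (g:ℂ)) * (((x j : ℝ) : ℂ) * fderiv ℝ w (c • x) (EuclideanSpace.single j 1)) := by
      intro j; ring
    rw [Finset.sum_congr rfl fun j _ => this j, ← Finset.mul_sum]
    have h2 : ∀ j : Fin d, A * (I * (g:ℂ) * ((x j : ℝ) : ℂ))^2 * w (c • x)
        = -(A * (g:ℂ)^2 * w (c • x)) * ((x j : ℝ) : ℂ)^2 := by
      intro j
      have : (I * (g:ℂ) * ((x j : ℝ) : ℂ))^2 = I^2 * ((g:ℂ)*((x j:ℝ):ℂ))^2 := by ring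
      rw [this, Complex.I_sq]; ring
    rw [Finset.sum_congr rfl fun j _ => h2 j, ← Finset.mul_sum]
    ring
  rw [h1, clm_sum_apply]
  have hq : qC x = ∑ j, ((x j : ℝ) : ℂ)^2 := by
    rw [qC, esp_normsq_sum]; push_cast; rfl
  rw [lap, hq]
  ring

lemma uncurry_fderiv_split (v : ℝ → Esp d → ℂ) (hv : ContDiff ℝ (⊤ : ℕ∞) (Function.uncurry v))
    (s : ℝ) (y : Esp d) (a : ℝ) (b : Esp d) :
    fderiv ℝ (Function.uncurry v) (s, y) (a, b)
      = a • deriv (fun τ => v τ y) s + fderiv ℝ (v s) y b := by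
  set L := fderiv ℝ (Function.uncurry v) (s, y) with hL
  have hvd := hv.differentiable (by simp)
  have hLd : HasFDerivAt (Function.uncurry v) L (s, y) := (hvd (s, y)).hasFDerivAt
  have h1 : HasDerivAt (fun τ => v τ y) (L (1, 0)) s := by
    have hγ : HasDerivAt (fun τ : ℝ => (τ, y)) ((1:ℝ), (0 : Esp d)) s :=
      (hasDerivAt_id s).prodMk (hasDerivAt_const s y)
    exact hLd.comp_hasDerivAt s hγ
  have h2 : HasFDerivAt (v s)
      (L.comp (((0 : Esp d →L[ℝ] ℝ)).prod (ContinuousLinearMap.id ℝ (Esp d)))) y := by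
    have hγ : HasFDerivAt (fun y' : Esp d => (s, y'))
        (((0 : Esp d →L[ℝ] ℝ)).prod (ContinuousLinearMap.id ℝ (Esp d))) y :=
      (hasFDerivAt_const s y).prodMk (hasFDerivAt_id y)
    exact hLd.comp y hγ
  rw [h1.deriv, h2.fderiv]
  have : ((a, b) : ℝ × Esp d) = a • ((1:ℝ), (0 : Esp d)) + ((0:ℝ), b) := by
    simp [Prod.ext_iff]
  rw [this, map_add, L.map_smul]
  rfl

lemma deriv_lens_time (v : ℝ → Esp d → ℂ) (hv : ContDiff ℝ (⊤ : ℕ∞) (Function.uncurry v)) (x : Esp d)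
    (A : ℝ → ℂ) (A' : ℂ) (s c g : ℝ → ℝ) (s' c' g' t : ℝ)
    (hA : HasDerivAt A A' t) (hs : HasDerivAt s s' t) (hc : HasDerivAt c c' t)
    (hg : HasDerivAt g g' t) :
    deriv (fun τ => A τ * v (s τ) (c τ • x) * Complex.exp (I * ((g τ : ℝ):ℂ) * qC x / 2)) t
      = (A' * v (s t) (c t • x)
         + A t * ((s':ℂ) * deriv (fun τ => v τ (c t • x)) (s t)
                  + (c':ℂ) * fderiv ℝ (v (s t)) (c t • x) x)
         + A t * v (s t) (c t • x) * (I * ((g' : ℝ):ℂ) * qC x / 2))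
        * Complex.exp (I * ((g t : ℝ):ℂ) * qC x / 2) := by
  have hvd := hv.differentiable (by simp)
  have hγ : HasDerivAt (fun τ => ((s τ, c τ • x) : ℝ × Esp d)) ((s', c' • x)) t :=
    hs.prodMk (hc.smul_const x)
  have hV : HasDerivAt (fun τ => v (s τ) (c τ • x))
      (fderiv ℝ (Function.uncurry v) (s t, c t • x) (s', c' • x)) t :=
    by have h := (hvd (s t, c t • x)).hasFDerivAt.comp_hasDerivAt t hγ; exact h
  have hgC : HasDerivAt (fun τ => ((g τ : ℝ) : ℂ)) ((g' : ℝ) : ℂ) t := hg.ofReal_comp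
  have hE := ((((hgC.const_mul I)).mul_const (qC x)).div_const 2).cexp
  have hD := (hA.mul hV).mul hE
  erw [hD.deriv, uncurry_fderiv_split v hv (s t) (c t • x) s' (c' • x)]
  rw [(fderiv ℝ (v (s t)) (c t • x)).map_smul]
  simp only [Complex.real_smul, smul_eq_mul, Pi.mul_apply]
  ring

lemma wronskian_one (Ω : ℝ → ℝ) (μ ν : ℝ → ℝ)
    (hμ : Differentiable ℝ μ) (hμ' : Differentiable ℝ (deriv μ))
    (hμODE : ∀ t, deriv (deriv μ) t + Ω t * μ t = 0)
    (hμ0 : μ 0 = 0) (hμ'0 : deriv μ 0 = 1)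
    (hν : Differentiable ℝ ν) (hν' : Differentiable ℝ (deriv ν))
    (hνODE : ∀ t, deriv (deriv ν) t + Ω t * ν t = 0)
    (hν0 : ν 0 = 1) (hν'0 : deriv ν 0 = 0) :
    ∀ t, deriv μ t * ν t - μ t * deriv ν t = 1 := by
  intro t
  have hWd : Differentiable ℝ (fun t => deriv μ t * ν t - μ t * deriv ν t) :=
    (hμ'.mul hν).sub (hμ.mul hν')
  have hW0 : ∀ s, deriv (fun t => deriv μ t * ν t - μ t * deriv ν t) s = 0 := by
    intro s
    erw [deriv_fun_sub ((hμ' s).mul (hν s)) ((hμ s).mul (hν' s)),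
      deriv_mul (hμ' s) (hν s), deriv_mul (hμ s) (hν' s)]
    have h1 := hμODE s
    have h2 := hνODE s
    have e1 : deriv (deriv μ) s = -(Ω s * μ s) := by linarith
    have e2 : deriv (deriv ν) s = -(Ω s * ν s) := by linarith
    rw [e1, e2]; ring
  have := is_const_of_deriv_eq_zero hWd hW0 t 0
  simp only [hμ0, hμ'0, hν0, hν'0] at this
  linarith [this]


set_option maxHeartbeats 4000000 in
/-- Generalized lens transform: from a solution `v` of
`i∂ₜv + ½Δv = H(t)|v|^{2σ}v` one obtains, through the fundamental solutions `μ, ν`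
of `y'' + Ω y = 0`, a solution `u` of
`i∂ₜu + ½Δu = ½Ω(t)|x|²u + h(t)|u|^{2σ}u` with `h(t) = ν(t)^{dσ−2} H(μ(t)/ν(t))`,
on any open interval around `0` where `ν > 0`. -/
theorem generalized_lens_transform
    (d : ℕ) (hd : 1 ≤ d) (σ : ℝ) (hσ : 0 < σ)
    (Ω H : ℝ → ℝ) (hΩ : Continuous Ω) (hH : Continuous H)
    (μ ν : ℝ → ℝ)
    (hμ : Differentiable ℝ μ) (hμ' : Differentiable ℝ (deriv μ))
    (hμODE : ∀ t, deriv (deriv μ) t + Ω t * μ t = 0)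
    (hμ0 : μ 0 = 0) (hμ'0 : deriv μ 0 = 1)
    (hν : Differentiable ℝ ν) (hν' : Differentiable ℝ (deriv ν))
    (hνODE : ∀ t, deriv (deriv ν) t + Ω t * ν t = 0)
    (hν0 : ν 0 = 1) (hν'0 : deriv ν 0 = 0)
    (a b : ℝ) (hab : (0:ℝ) ∈ Set.Ioo a b)
    (hνpos : ∀ t ∈ Set.Ioo a b, 0 < ν t)
    (v : ℝ → Esp d → ℂ) (hv : ContDiff ℝ (⊤ : ℕ∞) (Function.uncurry v))
    (hveq : ∀ (t : ℝ) (x : Esp d),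
      Complex.I * deriv (fun s => v s x) t + (1 / 2) * lap (v t) x
        = ((H t : ℝ) : ℂ) * (((‖v t x‖ ^ (2:ℕ)) ^ σ : ℝ) : ℂ) * v t x)
    (u : ℝ → Esp d → ℂ)
    (hu : ∀ (t : ℝ) (x : Esp d),
      u t x = (((ν t ^ (-(d : ℝ) / 2) : ℝ)) : ℂ)
        * v (μ t / ν t) ((ν t)⁻¹ • x)
        * Complex.exp (Complex.I * ((deriv ν t / ν t : ℝ) : ℂ)
            * ((‖x‖ ^ (2:ℕ) : ℝ) : ℂ) / 2)) :
    ∀ t ∈ Set.Ioo a b, ∀ x : Esp d,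
      Complex.I * deriv (fun s => u s x) t + (1 / 2) * lap (u t) x
        = (1 / 2) * ((Ω t : ℝ) : ℂ) * ((‖x‖ ^ (2:ℕ) : ℝ) : ℂ) * u t x
          + (((ν t ^ ((d : ℝ) * σ - 2) * H (μ t / ν t) : ℝ)) : ℂ)
            * (((‖u t x‖ ^ (2:ℕ)) ^ σ : ℝ) : ℂ) * u t x := by
  intro t ht x
  have hN : 0 < ν t := hνpos t ht
  have hN0 : ν t ≠ 0 := hN.ne'
  -- time derivative pieces
  have hAr : HasDerivAt (fun τ => ν τ ^ (-(d:ℝ)/2))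
      ((-(d:ℝ)/2) * (ν t ^ (-(d:ℝ)/2) / ν t) * deriv ν t) t := by
    have h := (Real.hasDerivAt_rpow_const (p := -(d:ℝ)/2) (Or.inl hN0)).comp t (hν t).hasDerivAt
    refine h.congr_deriv ?_
    rw [← Real.rpow_sub_one hN0]
  have hA : HasDerivAt (fun τ => ((ν τ ^ (-(d:ℝ)/2) : ℝ) : ℂ))
      (((-(d:ℝ)/2) * (ν t ^ (-(d:ℝ)/2) / ν t) * deriv ν t : ℝ) : ℂ) t := hAr.ofReal_comp
  have hs : HasDerivAt (fun τ => μ τ / ν τ)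
      ((deriv μ t * ν t - μ t * deriv ν t) / ν t ^ 2) t :=
    (hμ t).hasDerivAt.div (hν t).hasDerivAt hN0
  have hc : HasDerivAt (fun τ => (ν τ)⁻¹) (-deriv ν t / ν t ^ 2) t :=
    (hν t).hasDerivAt.inv hN0
  have hg : HasDerivAt (fun τ => deriv ν τ / ν τ)
      ((deriv (deriv ν) t * ν t - deriv ν t * deriv ν t) / ν t ^ 2) t :=
    (hν' t).hasDerivAt.div (hν t).hasDerivAt hN0
  have hD : deriv (fun τ => ((ν τ ^ (-(d:ℝ)/2) : ℝ) : ℂ) * v (μ τ / ν τ) ((ν τ)⁻¹ • x)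
        * Complex.exp (I * ((deriv ν τ / ν τ : ℝ) : ℂ) * qC x / 2)) t
      = ((((-(d:ℝ)/2) * (ν t ^ (-(d:ℝ)/2) / ν t) * deriv ν t : ℝ) : ℂ) * v (μ t / ν t) ((ν t)⁻¹ • x)
         + ((ν t ^ (-(d:ℝ)/2) : ℝ) : ℂ)
           * ((((deriv μ t * ν t - μ t * deriv ν t) / ν t ^ 2 : ℝ) : ℂ)
                * deriv (fun τ => v τ ((ν t)⁻¹ • x)) (μ t / ν t)
              + ((-deriv ν t / ν t ^ 2 : ℝ) : ℂ) * fderiv ℝ (v (μ t / ν t)) ((ν t)⁻¹ • x) x)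
         + ((ν t ^ (-(d:ℝ)/2) : ℝ) : ℂ) * v (μ t / ν t) ((ν t)⁻¹ • x)
           * (I * (((deriv (deriv ν) t * ν t - deriv ν t * deriv ν t) / ν t ^ 2 : ℝ) : ℂ) * qC x / 2))
        * Complex.exp (I * ((deriv ν t / ν t : ℝ) : ℂ) * qC x / 2) :=
    deriv_lens_time v hv x _ _ _ _ _ _ _ _ t hA hs hc hg
  have hufun : (fun τ => u τ x) = fun τ => ((ν τ ^ (-(d:ℝ)/2) : ℝ) : ℂ) * v (μ τ / ν τ) ((ν τ)⁻¹ • x)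
        * Complex.exp (I * ((deriv ν τ / ν τ : ℝ) : ℂ) * qC x / 2) :=
    funext fun τ => hu τ x
  -- spatial derivative
  have hvs0 : ContDiff ℝ (⊤ : ℕ∞) (v (μ t / ν t)) := hv.comp (contDiff_const.prodMk contDiff_id)
  have hlapfun : u t = fun y' => ((ν t ^ (-(d:ℝ)/2) : ℝ) : ℂ) * v (μ t / ν t) ((ν t)⁻¹ • y')
        * Complex.exp (I * ((deriv ν t / ν t : ℝ) : ℂ) * qC y' / 2) :=
    funext fun y' => hu t y'
  have hlap : lap (fun y' => ((ν t ^ (-(d:ℝ)/2) : ℝ) : ℂ) * v (μ t / ν t) ((ν t)⁻¹ • y')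
        * Complex.exp (I * ((deriv ν t / ν t : ℝ) : ℂ) * qC y' / 2)) x
      = (((ν t ^ (-(d:ℝ)/2) : ℝ) : ℂ) * (((ν t)⁻¹ : ℝ) : ℂ)^2 * lap (v (μ t / ν t)) ((ν t)⁻¹ • x)
         + 2 * ((ν t ^ (-(d:ℝ)/2) : ℝ) : ℂ) * (((ν t)⁻¹ : ℝ) : ℂ) * (I * ((deriv ν t / ν t : ℝ) : ℂ))
             * (fderiv ℝ (v (μ t / ν t)) ((ν t)⁻¹ • x) x)
         + ((ν t ^ (-(d:ℝ)/2) : ℝ) : ℂ) * (I * ((deriv ν t / ν t : ℝ) : ℂ)) * (d:ℂ) * v (μ t / ν t) ((ν t)⁻¹ • x)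
         - ((ν t ^ (-(d:ℝ)/2) : ℝ) : ℂ) * ((deriv ν t / ν t : ℝ) : ℂ)^2 * qC x * v (μ t / ν t) ((ν t)⁻¹ • x))
        * Complex.exp (I * ((deriv ν t / ν t : ℝ) : ℂ) * qC x / 2) :=
    lap_lens (v (μ t / ν t)) hvs0 _ _ _ x
  -- norm identity
  have hnu : ‖u t x‖ = ν t ^ (-(d:ℝ)/2) * ‖v (μ t / ν t) ((ν t)⁻¹ • x)‖ := by
    rw [hu t x, norm_mul, norm_mul]
    have h1 : ‖(((ν t ^ (-(d:ℝ)/2) : ℝ)) : ℂ)‖ = ν t ^ (-(d:ℝ)/2) := by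
      rw [Complex.norm_real, Real.norm_eq_abs, abs_of_pos (Real.rpow_pos_of_pos hN _)]
    have h2 : ‖Complex.exp (I * ((deriv ν t / ν t : ℝ) : ℂ) * ((‖x‖^(2:ℕ) : ℝ) : ℂ) / 2)‖ = 1 := by
      have : Complex.I * ((deriv ν t / ν t : ℝ) : ℂ) * ((‖x‖^(2:ℕ) : ℝ) : ℂ) / 2
          = (((deriv ν t / ν t) * ‖x‖^(2:ℕ) / 2 : ℝ) : ℂ) * I := by
        push_cast; ring
      rw [this, Complex.norm_exp_ofReal_mul_I]
    rw [h1, h2, mul_one]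
  -- rpow algebra for the nonlinear term
  have hrealid : ν t ^ ((d:ℝ)*σ - 2) * H (μ t / ν t) * ((‖u t x‖^(2:ℕ))^σ)
      = (ν t ^(2:ℕ))⁻¹ * H (μ t / ν t) * ((‖v (μ t / ν t) ((ν t)⁻¹ • x)‖^(2:ℕ))^σ) := by
    have e1 : (‖u t x‖^(2:ℕ) : ℝ) = ν t ^ (-(d:ℝ)) * ‖v (μ t / ν t) ((ν t)⁻¹ • x)‖^(2:ℕ) := by
      rw [hnu, mul_pow, ← Real.rpow_natCast (ν t ^ (-(d:ℝ)/2)) 2, ← Real.rpow_mul hN.le]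
      norm_num
    have e2 : ((‖u t x‖^(2:ℕ))^σ : ℝ)
        = ν t ^ (-(d:ℝ)*σ) * ((‖v (μ t / ν t) ((ν t)⁻¹ • x)‖^(2:ℕ))^σ) := by
      rw [e1, Real.mul_rpow (by positivity) (by positivity), ← Real.rpow_mul hN.le]
    have e3 : ν t ^ ((d:ℝ)*σ - 2) * ν t ^ (-(d:ℝ)*σ) = (ν t ^(2:ℕ))⁻¹ := by
      rw [← Real.rpow_add hN]
      have : (d:ℝ)*σ - 2 + (-(d:ℝ)*σ) = -2 := by ring
      rw [this, Real.rpow_neg hN.le, ← Real.rpow_natCast (ν t) 2]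
      norm_num
    rw [e2, ← e3]; ring
  have hRterm : ((ν t ^ ((d:ℝ)*σ - 2) * H (μ t / ν t) : ℝ) : ℂ) * (((‖u t x‖^(2:ℕ))^σ : ℝ) : ℂ)
      = (((ν t : ℝ) : ℂ)^2)⁻¹ * ((H (μ t / ν t) : ℝ) : ℂ)
        * (((‖v (μ t / ν t) ((ν t)⁻¹ • x)‖^(2:ℕ))^σ : ℝ) : ℂ) := by
    rw [← Complex.ofReal_mul, hrealid]
    push_cast
    ring
  -- Wronskian and ODE facts
  have hW := wronskian_one Ω μ ν hμ hμ' hμODE hμ0 hμ'0 hν hν' hνODE hν0 hν'0 t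
  have hWC : ((deriv μ t : ℝ) : ℂ) * ((ν t : ℝ) : ℂ) - ((μ t : ℝ) : ℂ) * ((deriv ν t : ℝ) : ℂ) = 1 := by
    exact_mod_cast congrArg (Complex.ofReal) hW
  have hν'' : deriv (deriv ν) t = -(Ω t * ν t) := by linarith [hνODE t]
  have hν''C : ((deriv (deriv ν) t : ℝ) : ℂ) = -(((Ω t : ℝ) : ℂ) * ((ν t : ℝ) : ℂ)) := by
    rw [hν'']; push_cast; ring
  have hNC : ((ν t : ℝ) : ℂ) ≠ 0 := by exact_mod_cast hN0
  have hinvC : ((ν t : ℝ) : ℂ) * (((ν t : ℝ) : ℂ))⁻¹ = 1 := mul_inv_cancel₀ hNC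
  have hveq' := hveq (μ t / ν t) ((ν t)⁻¹ • x)
  -- assemble
  rw [hufun, hD, hRterm, hlapfun, hlap]
  simp only [qC]
  beta_reduce
  rw [hν'']
  push_cast
  linear_combination (((ν t ^ (-(d:ℝ)/2) : ℝ) : ℂ)
      * Complex.exp (I * (((deriv ν t : ℝ) : ℂ) / ((ν t : ℝ) : ℂ)) * ((‖x‖ : ℝ) : ℂ)^(2:ℕ) / 2)
      / ((ν t : ℝ) : ℂ)^2) * hveq'
    + (I * ((ν t ^ (-(d:ℝ)/2) : ℝ) : ℂ) * deriv (fun τ => v τ ((ν t)⁻¹ • x)) (μ t / ν t)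
        * Complex.exp (I * (((deriv ν t : ℝ) : ℂ) / ((ν t : ℝ) : ℂ)) * ((‖x‖ : ℝ) : ℂ)^(2:ℕ) / 2)
        / ((ν t : ℝ) : ℂ)^2) * hWC
    + ((-(((Ω t : ℝ) : ℂ)) * ((ν t : ℝ) : ℂ)^2 - ((deriv ν t : ℝ) : ℂ)^2)
        * ((ν t ^ (-(d:ℝ)/2) : ℝ) : ℂ) * v (μ t / ν t) ((ν t)⁻¹ • x)
        * ((‖x‖ : ℝ) : ℂ)^(2:ℕ)
        * Complex.exp (I * (((deriv ν t : ℝ) : ℂ) / ((ν t : ℝ) : ℂ)) * ((‖x‖ : ℝ) : ℂ)^(2:ℕ) / 2)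
        / (2 * ((ν t : ℝ) : ℂ)^2)) * Complex.I_sq
    + (((ν t ^ (-(d:ℝ)/2) : ℝ) : ℂ) * v (μ t / ν t) ((ν t)⁻¹ • x)
        * ((‖x‖ : ℝ) : ℂ)^(2:ℕ)
        * Complex.exp (I * (((deriv ν t : ℝ) : ℂ) / ((ν t : ℝ) : ℂ)) * ((‖x‖ : ℝ) : ℂ)^(2:ℕ) / 2)
        * (((Ω t : ℝ) : ℂ) / 2) * (((ν t : ℝ) : ℂ) * (((ν t : ℝ) : ℂ))⁻¹ + 1)) * hinvC
end
end

section
/- Minimal-mass blow-up solution of the focusing L²-critical Schrödinger equation. Let d ≥ 1 and let Q : E → ℝ be smooth with Q(x) > 0 for all x ∈ E, satisfying −½ ΔQ(x) + Q(x) = Q(x)^{1+4/d} for all x ∈ E. Define, for t > 0 and x ∈ E, v(t,x) = t^{−d/2} Q(x/t) · exp( i |x|²/(2t) − i/t ). Then i ∂_t v(t,x) + ½ Δv(t,x) = −|v(t,x)|^{4/d} v(t,x) for all t > 0 and x ∈ E. -/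
noncomputable section

open MeasureTheory Real Complex

/-- Partial derivative in the `j`-th space direction (real-valued functions). -/
def sderivR {d : ℕ} (j : Fin d) (f : Esp d → ℝ) (x : Esp d) : ℝ :=
  fderiv ℝ f x (EuclideanSpace.single j 1)

/-- Spatial Laplacian (real-valued functions). -/
def lapR {d : ℕ} (f : Esp d → ℝ) (x : Esp d) : ℝ :=
  ∑ j, sderivR j (fun y => sderivR j f y) x

private lemma clm_decomp {d : ℕ} (L : EuclideanSpace ℝ (Fin d) →L[ℝ] ℝ)
    (x : EuclideanSpace ℝ (Fin d)) :
    L x = ∑ j, L (EuclideanSpace.single j 1) * x j := by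
  have hx : x = ∑ j, x j • EuclideanSpace.single j (1:ℝ) := by
    ext i
    rw [show ((∑ j, x j • EuclideanSpace.single j (1:ℝ)) i)
        = ∑ j, (x j • EuclideanSpace.single j (1:ℝ)) i from by rw [WithLp.ofLp_sum]; exact Finset.sum_apply i Finset.univ _]
    simp [EuclideanSpace.single_apply]
  conv_lhs => rw [hx]
  rw [map_sum]
  simp [mul_comm]

set_option maxHeartbeats 1000000 in
/-- Minimal-mass blow-up solution of the focusing `L²`-critical NLS: if `Q > 0` is a smooth
solution of `−½ΔQ + Q = Q^{1+4/d}`, then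
`v(t,x) = t^{−d/2} Q(x/t) e^{i|x|²/(2t) − i/t}` solves
`i∂ₜv + ½Δv = −|v|^{4/d} v` for `t > 0`. -/
theorem minimal_mass_blowup
    (d : ℕ) (hd : 1 ≤ d)
    (Q : Esp d → ℝ) (hQ : ContDiff ℝ (⊤ : ℕ∞) Q) (hQpos : ∀ x, 0 < Q x)
    (hQeq : ∀ x : Esp d,
      -(1 / 2) * lapR Q x + Q x = (Q x) ^ (1 + 4 / (d : ℝ)))
    (v : ℝ → Esp d → ℂ)
    (hv : ∀ (t : ℝ) (x : Esp d), 0 < t →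
      v t x = (((t ^ (-(d : ℝ) / 2) : ℝ)) : ℂ) * ((Q (t⁻¹ • x) : ℝ) : ℂ)
        * Complex.exp (Complex.I * ((‖x‖ ^ (2:ℕ) / (2 * t) : ℝ) : ℂ)
            - Complex.I / ((t : ℝ) : ℂ))) :
    ∀ (t : ℝ), 0 < t → ∀ (x : Esp d),
      Complex.I * deriv (fun s => v s x) t + (1 / 2) * lap (v t) x
        = -(((‖v t x‖ ^ (2:ℕ)) ^ (2 / (d : ℝ)) : ℝ) : ℂ) * v t x := by
  intro t ht x
  have htne : t ≠ 0 := ht.ne'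
  have hdne : (d:ℝ) ≠ 0 := Nat.cast_ne_zero.mpr (by omega)
  have hQdiff : Differentiable ℝ Q := hQ.differentiable (by simp)
  have hAdiff : ∀ j : Fin d,
      Differentiable ℝ (fun y : Esp d => fderiv ℝ Q y (EuclideanSpace.single j 1)) := by
    intro j
    have h1 : ContDiff ℝ 1 (fderiv ℝ Q) := hQ.fderiv_right (by exact WithTop.coe_le_coe.mpr le_top)
    exact (h1.clm_apply contDiff_const).differentiable one_ne_zero
  -- exponent conversion
  have hveq : ∀ s : ℝ, s ≠ 0 → ∀ y : Esp d,
      Complex.I * ((‖y‖ ^ (2:ℕ) / (2 * s) : ℝ) : ℂ) - Complex.I / ((s : ℝ) : ℂ)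
        = Complex.I * (((‖y‖^2 - 2) * (2*s)⁻¹ : ℝ) : ℂ) := by
    intro s hs y
    have hsC : ((s:ℂ)) ≠ 0 := by exact_mod_cast hs
    push_cast
    field_simp
  have hvF : v t = (fun y : Esp d => ((t ^ (-(d:ℝ)/2) : ℝ) : ℂ) * ((Q (t⁻¹ • y) : ℝ) : ℂ)
      * Complex.exp (Complex.I * (((‖y‖^2 - 2) * (2*t)⁻¹ : ℝ) : ℂ))) := by
    funext y
    rw [hv t y ht, hveq t htne y]
  ---- TIME DERIVATIVE ----
  have hWv : (fun s => v s x) =ᶠ[nhds t] (fun s : ℝ =>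
      ((s ^ (-(d:ℝ)/2) : ℝ) : ℂ) * ((Q (s⁻¹ • x) : ℝ) : ℂ)
        * Complex.exp (Complex.I * (((‖x‖^2 - 2) * (2*s)⁻¹ : ℝ) : ℂ))) := by
    filter_upwards [Ioi_mem_nhds ht] with s hs
    rw [hv s x hs, hveq s (ne_of_gt hs) x]
  have h1 : HasDerivAt (fun s : ℝ => s ^ (-(d:ℝ)/2)) ((-(d:ℝ)/2) * t ^ (-(d:ℝ)/2 - 1)) t :=
    Real.hasDerivAt_rpow_const (Or.inl htne)
  have h2inv : HasDerivAt (fun s : ℝ => s⁻¹) (-(t^2)⁻¹) t := hasDerivAt_inv htne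
  have h2 : HasDerivAt (fun s : ℝ => Q (s⁻¹ • x)) (fderiv ℝ Q (t⁻¹ • x) ((-(t^2)⁻¹) • x)) t := by
    have := (hQdiff (t⁻¹ • x)).hasFDerivAt.comp_hasDerivAt t (h2inv.smul_const x)
    exact this
  have h2' : HasDerivAt (fun s : ℝ => Q (s⁻¹ • x)) (-(t^2)⁻¹ * fderiv ℝ Q (t⁻¹ • x) x) t := by
    rw [show (-(t^2)⁻¹ * fderiv ℝ Q (t⁻¹ • x) x)
        = fderiv ℝ Q (t⁻¹ • x) ((-(t^2)⁻¹) • x) by rw [ContinuousLinearMap.map_smul]; rfl]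
    exact h2
  have h3inv : HasDerivAt (fun s : ℝ => (2*s)⁻¹) (-2/(2*t)^2) t := by
    have := ((hasDerivAt_id t).const_mul (2:ℝ)).inv (by simp [htne])
    rw [show (-2/(2*t)^2 : ℝ) = -(2*1)/(2*t)^2 by ring]
    exact this
  have h3 : HasDerivAt (fun s : ℝ =>
        Complex.exp (Complex.I * (((‖x‖^2 - 2) * (2*s)⁻¹ : ℝ) : ℂ)))
      (Complex.exp (Complex.I * (((‖x‖^2 - 2) * (2*t)⁻¹ : ℝ) : ℂ)) *
        (Complex.I * (((‖x‖^2 - 2) * (-2/(2*t)^2) : ℝ) : ℂ))) t :=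
    (((h3inv.const_mul (‖x‖^2 - 2)).ofReal_comp).const_mul Complex.I).cexp
  have hder : deriv (fun s => v s x) t
      = (((-(d:ℝ)/2) * t ^ (-(d:ℝ)/2 - 1) : ℝ) : ℂ) * ((Q (t⁻¹ • x) : ℝ) : ℂ)
          * Complex.exp (Complex.I * (((‖x‖^2 - 2) * (2*t)⁻¹ : ℝ) : ℂ))
        + ((t ^ (-(d:ℝ)/2) : ℝ) : ℂ) * ((-(t^2)⁻¹ * fderiv ℝ Q (t⁻¹ • x) x : ℝ) : ℂ)
          * Complex.exp (Complex.I * (((‖x‖^2 - 2) * (2*t)⁻¹ : ℝ) : ℂ))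
        + ((t ^ (-(d:ℝ)/2) : ℝ) : ℂ) * ((Q (t⁻¹ • x) : ℝ) : ℂ)
          * (Complex.exp (Complex.I * (((‖x‖^2 - 2) * (2*t)⁻¹ : ℝ) : ℂ)) *
              (Complex.I * (((‖x‖^2 - 2) * (-2/(2*t)^2) : ℝ) : ℂ))) := by
    rw [hWv.deriv_eq]
    have hWd := (h1.ofReal_comp.mul h2'.ofReal_comp).mul h3
    refine hWd.deriv.trans ?_
    simp only [Pi.mul_apply]
    push_cast
    ring
  ---- FIRST SPACE DERIVATIVE ----
  have hstep1 : ∀ (j : Fin d) (w : Esp d),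
      sderiv j (fun y => ((t ^ (-(d:ℝ)/2) : ℝ) : ℂ) * ((Q (t⁻¹ • y) : ℝ) : ℂ)
          * Complex.exp (Complex.I * (((‖y‖^2 - 2) * (2*t)⁻¹ : ℝ) : ℂ))) w
        = ((t ^ (-(d:ℝ)/2) : ℝ) : ℂ)
            * ((t⁻¹ * fderiv ℝ Q (t⁻¹ • w) (EuclideanSpace.single j 1) : ℝ) : ℂ)
            * Complex.exp (Complex.I * (((‖w‖^2 - 2) * (2*t)⁻¹ : ℝ) : ℂ))
          + (((t ^ (-(d:ℝ)/2) : ℝ) : ℂ) * ((Q (t⁻¹ • w) : ℝ) : ℂ)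
              * Complex.exp (Complex.I * (((‖w‖^2 - 2) * (2*t)⁻¹ : ℝ) : ℂ)))
            * (Complex.I * ((w j * t⁻¹ : ℝ) : ℂ)) := by
    intro j w
    have hsm : HasFDerivAt (fun y : Esp d => t⁻¹ • y)
        (t⁻¹ • ContinuousLinearMap.id ℝ (Esp d)) w := (hasFDerivAt_id w).const_smul t⁻¹
    have hq := (hQdiff (t⁻¹ • w)).hasFDerivAt.comp w hsm
    have hqc := Complex.ofRealCLM.hasFDerivAt.comp w hq
    have hns : HasFDerivAt (fun y : Esp d => (‖y‖^2 : ℝ)) (2 • (innerSL ℝ w)) w :=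
      (hasStrictFDerivAt_norm_sq w).hasFDerivAt
    have hψ2 := (hns.sub_const (2:ℝ)).mul_const ((2*t)⁻¹:ℝ)
    have hφ := (Complex.ofRealCLM.hasFDerivAt.comp w hψ2).const_mul Complex.I
    have hE := hφ.cexp
    have hFd := (hqc.const_mul ((t ^ (-(d:ℝ)/2) : ℝ) : ℂ)).mul hE
    have h2' : sderiv j (fun y => ((t ^ (-(d:ℝ)/2) : ℝ) : ℂ) * ((Q (t⁻¹ • y) : ℝ) : ℂ)
          * Complex.exp (Complex.I * (((‖y‖^2 - 2) * (2*t)⁻¹ : ℝ) : ℂ))) w = _ :=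
      congrArg (fun L : Esp d →L[ℝ] ℂ => L (EuclideanSpace.single j 1)) hFd.fderiv
    rw [h2']
    simp only [ContinuousLinearMap.add_apply, ContinuousLinearMap.smul_apply,
      ContinuousLinearMap.coe_comp', Function.comp_apply, ContinuousLinearMap.coe_smul',
      Pi.smul_apply, ContinuousLinearMap.id_apply, Complex.ofRealCLM_apply,
      ContinuousLinearMap.sub_apply, ContinuousLinearMap.smulRight_apply,
      ContinuousLinearMap.zero_apply, innerSL_apply_apply, smul_eq_mul, ContinuousLinearMap.map_smul,
      EuclideanSpace.inner_single_right, RCLike.inner_apply, conj_trivial]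
    push_cast
    ring
  ---- SECOND SPACE DERIVATIVE ----
  have hstep2 : ∀ (j : Fin d),
      sderiv j (fun w => ((t ^ (-(d:ℝ)/2) : ℝ) : ℂ)
            * ((t⁻¹ * fderiv ℝ Q (t⁻¹ • w) (EuclideanSpace.single j 1) : ℝ) : ℂ)
            * Complex.exp (Complex.I * (((‖w‖^2 - 2) * (2*t)⁻¹ : ℝ) : ℂ))
          + (((t ^ (-(d:ℝ)/2) : ℝ) : ℂ) * ((Q (t⁻¹ • w) : ℝ) : ℂ)
              * Complex.exp (Complex.I * (((‖w‖^2 - 2) * (2*t)⁻¹ : ℝ) : ℂ)))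
            * (Complex.I * ((w j * t⁻¹ : ℝ) : ℂ))) x
        = ((t⁻¹ * t⁻¹ : ℝ) : ℂ) * ((t ^ (-(d:ℝ)/2) : ℝ) : ℂ)
            * Complex.exp (Complex.I * (((‖x‖^2 - 2) * (2*t)⁻¹ : ℝ) : ℂ))
            * ((fderiv ℝ (fun y : Esp d => fderiv ℝ Q y (EuclideanSpace.single j 1)) (t⁻¹ • x)
                (EuclideanSpace.single j 1) : ℝ) : ℂ)
          + (2 * Complex.I) * ((t⁻¹ * t⁻¹ : ℝ) : ℂ) * ((t ^ (-(d:ℝ)/2) : ℝ) : ℂ)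
            * Complex.exp (Complex.I * (((‖x‖^2 - 2) * (2*t)⁻¹ : ℝ) : ℂ))
            * ((fderiv ℝ Q (t⁻¹ • x) (EuclideanSpace.single j 1) * x j : ℝ) : ℂ)
          + (Complex.I * Complex.I) * ((t⁻¹ * t⁻¹ : ℝ) : ℂ) * ((t ^ (-(d:ℝ)/2) : ℝ) : ℂ)
            * ((Q (t⁻¹ • x) : ℝ) : ℂ)
            * Complex.exp (Complex.I * (((‖x‖^2 - 2) * (2*t)⁻¹ : ℝ) : ℂ))
            * (((x j)^2 : ℝ) : ℂ)
          + Complex.I * ((t⁻¹ : ℝ) : ℂ) * ((t ^ (-(d:ℝ)/2) : ℝ) : ℂ)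
            * ((Q (t⁻¹ • x) : ℝ) : ℂ)
            * Complex.exp (Complex.I * (((‖x‖^2 - 2) * (2*t)⁻¹ : ℝ) : ℂ)) := by
    intro j
    have hsm : HasFDerivAt (fun y : Esp d => t⁻¹ • y)
        (t⁻¹ • ContinuousLinearMap.id ℝ (Esp d)) x := (hasFDerivAt_id x).const_smul t⁻¹
    have hq := (hQdiff (t⁻¹ • x)).hasFDerivAt.comp x hsm
    have hqc := Complex.ofRealCLM.hasFDerivAt.comp x hq
    have ha := ((hAdiff j) (t⁻¹ • x)).hasFDerivAt.comp x hsm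
    have hac := Complex.ofRealCLM.hasFDerivAt.comp x (ha.const_mul t⁻¹)
    have hns : HasFDerivAt (fun y : Esp d => (‖y‖^2 : ℝ)) (2 • (innerSL ℝ x)) x :=
      (hasStrictFDerivAt_norm_sq x).hasFDerivAt
    have hψ2 := (hns.sub_const (2:ℝ)).mul_const ((2*t)⁻¹:ℝ)
    have hφ := (Complex.ofRealCLM.hasFDerivAt.comp x hψ2).const_mul Complex.I
    have hE := hφ.cexp
    have hcoord : HasFDerivAt (fun y : Esp d => y j) (EuclideanSpace.proj (𝕜 := ℝ) j) x :=
      (EuclideanSpace.proj (𝕜 := ℝ) j).hasFDerivAt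
    have hcoordc := (Complex.ofRealCLM.hasFDerivAt.comp x
      (hcoord.mul_const (t⁻¹:ℝ))).const_mul Complex.I
    have hT1 := (hac.const_mul ((t ^ (-(d:ℝ)/2) : ℝ) : ℂ)).mul hE
    have hT2 := ((hqc.const_mul ((t ^ (-(d:ℝ)/2) : ℝ) : ℂ)).mul hE).mul hcoordc
    have hG := hT1.add hT2
    have h2' : sderiv j (fun w => ((t ^ (-(d:ℝ)/2) : ℝ) : ℂ)
            * ((t⁻¹ * fderiv ℝ Q (t⁻¹ • w) (EuclideanSpace.single j 1) : ℝ) : ℂ)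
            * Complex.exp (Complex.I * (((‖w‖^2 - 2) * (2*t)⁻¹ : ℝ) : ℂ))
          + (((t ^ (-(d:ℝ)/2) : ℝ) : ℂ) * ((Q (t⁻¹ • w) : ℝ) : ℂ)
              * Complex.exp (Complex.I * (((‖w‖^2 - 2) * (2*t)⁻¹ : ℝ) : ℂ)))
            * (Complex.I * ((w j * t⁻¹ : ℝ) : ℂ))) x = _ :=
      congrArg (fun L : Esp d →L[ℝ] ℂ => L (EuclideanSpace.single j 1)) hG.fderiv
    rw [h2']
    simp only [ContinuousLinearMap.add_apply, ContinuousLinearMap.smul_apply,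
      ContinuousLinearMap.coe_comp', Function.comp_apply, ContinuousLinearMap.coe_smul',
      Pi.smul_apply, ContinuousLinearMap.id_apply, Complex.ofRealCLM_apply,
      ContinuousLinearMap.sub_apply, ContinuousLinearMap.smulRight_apply,
      ContinuousLinearMap.zero_apply, innerSL_apply_apply, smul_eq_mul, ContinuousLinearMap.map_smul,
      EuclideanSpace.inner_single_right, RCLike.inner_apply, conj_trivial,
      PiLp.proj_apply, EuclideanSpace.single_apply, Pi.mul_apply]
    push_cast
    ring
  ---- LAPLACIAN ----
  have hBsum : ∑ j, fderiv ℝ (fun y : Esp d => fderiv ℝ Q y (EuclideanSpace.single j 1))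
      (t⁻¹ • x) (EuclideanSpace.single j 1) = lapR Q (t⁻¹ • x) := by
    simp [lapR, sderivR]
  have hAsum : ∑ j, fderiv ℝ Q (t⁻¹ • x) (EuclideanSpace.single j 1) * x j
      = fderiv ℝ Q (t⁻¹ • x) x := (clm_decomp _ x).symm
  have hx2sum : ∑ j, (x j)^2 = ‖x‖^2 := by
    rw [PiLp.norm_sq_eq_of_L2]
    simp [_root_.sq_abs]
  have hlap : lap (v t) x
      = ((t⁻¹ * t⁻¹ : ℝ) : ℂ) * ((t ^ (-(d:ℝ)/2) : ℝ) : ℂ)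
          * Complex.exp (Complex.I * (((‖x‖^2 - 2) * (2*t)⁻¹ : ℝ) : ℂ))
          * ((lapR Q (t⁻¹ • x) : ℝ) : ℂ)
        + (2 * Complex.I) * ((t⁻¹ * t⁻¹ : ℝ) : ℂ) * ((t ^ (-(d:ℝ)/2) : ℝ) : ℂ)
          * Complex.exp (Complex.I * (((‖x‖^2 - 2) * (2*t)⁻¹ : ℝ) : ℂ))
          * ((fderiv ℝ Q (t⁻¹ • x) x : ℝ) : ℂ)
        + (Complex.I * Complex.I) * ((t⁻¹ * t⁻¹ : ℝ) : ℂ) * ((t ^ (-(d:ℝ)/2) : ℝ) : ℂ)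
          * ((Q (t⁻¹ • x) : ℝ) : ℂ)
          * Complex.exp (Complex.I * (((‖x‖^2 - 2) * (2*t)⁻¹ : ℝ) : ℂ))
          * ((‖x‖^2 : ℝ) : ℂ)
        + (d : ℂ) * (Complex.I * ((t⁻¹ : ℝ) : ℂ) * ((t ^ (-(d:ℝ)/2) : ℝ) : ℂ)
            * ((Q (t⁻¹ • x) : ℝ) : ℂ)
            * Complex.exp (Complex.I * (((‖x‖^2 - 2) * (2*t)⁻¹ : ℝ) : ℂ))) := by
    rw [hvF]
    simp only [lap]
    rw [Finset.sum_congr rfl (fun j _ => by rw [funext (hstep1 j)])]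
    rw [Finset.sum_congr rfl (fun j _ => hstep2 j)]
    rw [Finset.sum_add_distrib, Finset.sum_add_distrib, Finset.sum_add_distrib,
      ← Finset.mul_sum, ← Finset.mul_sum, ← Finset.mul_sum,
      Finset.sum_const, Finset.card_univ, Fintype.card_fin, nsmul_eq_mul,
      ← Complex.ofReal_sum, ← Complex.ofReal_sum, ← Complex.ofReal_sum,
      hBsum, hAsum, hx2sum]
  ---- VALUE AND NORM ----
  have hval : v t x = ((t ^ (-(d:ℝ)/2) : ℝ) : ℂ) * ((Q (t⁻¹ • x) : ℝ) : ℂ)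
      * Complex.exp (Complex.I * (((‖x‖^2 - 2) * (2*t)⁻¹ : ℝ) : ℂ)) := by
    rw [hvF]
  have hcpos : (0:ℝ) < t ^ (-(d:ℝ)/2) := Real.rpow_pos_of_pos ht _
  have hnorm : ‖v t x‖ = t ^ (-(d:ℝ)/2) * Q (t⁻¹ • x) := by
    have hre : ∀ r : ℝ, ‖Complex.exp (Complex.I * (r:ℂ))‖ = 1 := by
      intro r
      rw [Complex.norm_exp]
      simp
    rw [hval, norm_mul, norm_mul, hre]
    simp [_root_.abs_of_nonneg hcpos.le, _root_.abs_of_nonneg (hQpos (t⁻¹ • x)).le]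
  have hcoef : ((‖v t x‖ ^ (2:ℕ)) ^ (2/(d:ℝ)) : ℝ)
      = (t⁻¹)^(2:ℕ) * (Q (t⁻¹ • x)) ^ (4/(d:ℝ)) := by
    rw [hnorm, mul_pow, Real.mul_rpow (by positivity) (by positivity)]
    congr 1
    · rw [← Real.rpow_natCast (t ^ (-(d:ℝ)/2)) 2, ← Real.rpow_mul ht.le,
        ← Real.rpow_mul ht.le, ← Real.rpow_natCast t⁻¹ 2, ← Real.rpow_neg_one t,
        ← Real.rpow_mul ht.le]
      congr 1
      push_cast
      field_simp
    · rw [← Real.rpow_natCast (Q (t⁻¹ • x)) 2, ← Real.rpow_mul (hQpos _).le]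
      congr 1
      ring
  ---- ELLIPTIC EQUATION ----
  have hQP : Q (t⁻¹ • x) ^ (1 + 4/(d:ℝ))
      = Q (t⁻¹ • x) * Q (t⁻¹ • x) ^ (4/(d:ℝ)) := by
    rw [Real.rpow_add (hQpos _), Real.rpow_one]
  have hLrel : lapR Q (t⁻¹ • x)
      = 2 * Q (t⁻¹ • x) - 2 * (Q (t⁻¹ • x) * Q (t⁻¹ • x) ^ (4/(d:ℝ))) := by
    have h := hQeq (t⁻¹ • x)
    rw [hQP] at h
    linarith
  have hLrelC : ((lapR Q (t⁻¹ • x) : ℝ) : ℂ)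
      = 2 * ((Q (t⁻¹ • x) : ℝ) : ℂ)
        - 2 * (((Q (t⁻¹ • x) : ℝ) : ℂ) * ((Q (t⁻¹ • x) ^ (4/(d:ℝ)) : ℝ) : ℂ)) := by
    rw [hLrel]
    push_cast
    ring
  ---- FINAL ALGEBRA ----
  have hcrel : t ^ (-(d:ℝ)/2 - 1) = t ^ (-(d:ℝ)/2) * t⁻¹ := by
    rw [Real.rpow_sub ht, Real.rpow_one, div_eq_mul_inv]
  rw [hder, hlap, hcoef, hval, hcrel,
    show (-(t^2)⁻¹ : ℝ) = -(t⁻¹ * t⁻¹) by rw [sq, mul_inv],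
    show (-2/(2*t)^2 : ℝ) = -(t⁻¹ * t⁻¹)/2 by field_simp]
  set X := Complex.exp (Complex.I * (((‖x‖^2 - 2) * (2*t)⁻¹ : ℝ) : ℂ)) with hX
  push_cast
  linear_combination
    (((t ^ (-(d:ℝ)/2) : ℝ) : ℂ) * ((Q (t⁻¹ • x) : ℝ) : ℂ) * X * ((t:ℂ))⁻¹ * ((t:ℂ))⁻¹)
      * Complex.I_sq
    + ((1/2) * ((t ^ (-(d:ℝ)/2) : ℝ) : ℂ) * X * ((t:ℂ))⁻¹ * ((t:ℂ))⁻¹) * hLrelC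
end
end

section
/- Explicit blow-up solution for the focusing L²-critical equation with a time-dependent isotropic harmonic potential. Let d ≥ 1, let Ω : ℝ → ℝ be continuous, and let μ, ν be fundamental solutions at 0 of y'' + Ω y = 0. Let Q : E → ℝ be smooth with Q(x) > 0 for all x ∈ E, satisfying −½ ΔQ + Q = Q^{1+4/d} pointwise on E. Define, for those t ∈ ℝ with μ(t) > 0 and for x ∈ E, u(t,x) = μ(t)^{−d/2} Q(x/μ(t)) · exp( i (μ'(t)/μ(t)) |x|²/2 − i ν(t)/μ(t) ). Then at every (t,x) with μ(t) > 0 one has i ∂_t u(t,x) + ½ Δu(t,x) = ½ Ω(t) |x|² u(t,x) − |u(t,x)|^{4/d} u(t,x). -/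
noncomputable section

open MeasureTheory Real Complex

def Ph {d : ℕ} (c b : ℝ) (y : Esp d) : ℂ :=
  Complex.exp (Complex.I * (c:ℂ) * ((‖y‖ ^ (2:ℕ) : ℝ) : ℂ) / 2 - Complex.I * (b:ℂ))

lemma hasFDerivAt_normsq {d : ℕ} (x : Esp d) :
    HasFDerivAt (fun y : Esp d => ‖y‖ ^ (2:ℕ))
      (∑ j, (2 * x j) • (EuclideanSpace.proj j : Esp d →L[ℝ] ℝ)) x := by
  have h : (fun y : Esp d => ‖y‖ ^ (2:ℕ)) = fun y => ∑ j, y j ^ 2 := by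
    funext y
    rw [EuclideanSpace.norm_eq, Real.sq_sqrt (by positivity)]
    simp [sq_abs]
  rw [h]
  apply HasFDerivAt.fun_sum
  intro j _
  have h1 : HasFDerivAt (fun y : Esp d => y j) (EuclideanSpace.proj j : Esp d →L[ℝ] ℝ) x :=
    (EuclideanSpace.proj (𝕜 := ℝ) j).hasFDerivAt
  simpa [pow_two, two_mul, add_smul] using h1.fun_mul h1

lemma hasFDerivAt_Ph {d : ℕ} (c b : ℝ) (x : Esp d) :
    HasFDerivAt (Ph c b (d := d))
      ((Ph c b x * (Complex.I * (c:ℂ)) / 2) •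
        (Complex.ofRealCLM.comp (∑ j, (2 * x j) • (EuclideanSpace.proj j : Esp d →L[ℝ] ℝ)))) x := by
  have hN := hasFDerivAt_normsq x
  have hNC : HasFDerivAt (fun y : Esp d => ((‖y‖ ^ (2:ℕ) : ℝ) : ℂ))
      (Complex.ofRealCLM.comp (∑ j, (2 * x j) • (EuclideanSpace.proj j : Esp d →L[ℝ] ℝ))) x :=
    Complex.ofRealCLM.hasFDerivAt.comp x hN
  have key : (Ph c b (d := d)) = fun y =>
      Complex.exp (Complex.I * (c:ℂ) / 2 * ((‖y‖ ^ (2:ℕ) : ℝ) : ℂ) - Complex.I * (b:ℂ)) := by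
    funext y; unfold Ph; ring_nf
  rw [key]
  have h2 := ((hNC.const_mul (Complex.I * (c:ℂ) / 2)).sub_const (Complex.I * (b:ℂ))).cexp
  convert h2 using 1
  case e'_4 => rfl
  case e'_5 => rfl
  case e'_6 => rfl
  rw [smul_smul]
  congr 1
  ring

lemma shape0_lemma {d : ℕ} (j : Fin d) (B : ℂ) (m c b : ℝ) (g : Esp d → ℝ)
    (hg : Differentiable ℝ g) (x : Esp d) :
    DifferentiableAt ℝ (fun y : Esp d =>
        B * ((g (m⁻¹ • y) : ℝ) : ℂ) * Ph c b y) x ∧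
      sderiv j (fun y : Esp d =>
        B * ((g (m⁻¹ • y) : ℝ) : ℂ) * Ph c b y) x
      = B * Ph c b x *
          ( ((m⁻¹ : ℝ) : ℂ) * ((sderivR j g (m⁻¹ • x) : ℝ) : ℂ)
            + Complex.I * (c : ℂ) * ((x j : ℝ) : ℂ) * ((g (m⁻¹ • x) : ℝ) : ℂ) ) := by
  have hscale : HasFDerivAt (fun y : Esp d => m⁻¹ • y)
      (m⁻¹ • ContinuousLinearMap.id ℝ (Esp d)) x := by
    exact (hasFDerivAt_id x).const_smul m⁻¹
  have hgc : HasFDerivAt (fun y : Esp d => ((g (m⁻¹ • y) : ℝ) : ℂ))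
      (Complex.ofRealCLM.comp ((fderiv ℝ g (m⁻¹ • x)).comp
        (m⁻¹ • ContinuousLinearMap.id ℝ (Esp d)))) x :=
    Complex.ofRealCLM.hasFDerivAt.comp x
      (((hg (m⁻¹ • x)).hasFDerivAt).comp x hscale)
  have h3 := (hgc.const_mul B).fun_mul (hasFDerivAt_Ph c b x)
  refine ⟨h3.differentiableAt, ?_⟩
  rw [sderiv, h3.fderiv]
  simp only [ContinuousLinearMap.add_apply, ContinuousLinearMap.smul_apply,
    ContinuousLinearMap.comp_apply, ContinuousLinearMap.coe_smul', Pi.smul_apply,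
    ContinuousLinearMap.sum_apply, ContinuousLinearMap.id_apply,
    Complex.ofRealCLM_apply, PiLp.proj_apply, _root_.map_smul]
  rw [sderivR]
  simp only [EuclideanSpace.single_apply, smul_eq_mul, mul_ite, mul_one, mul_zero,
    Finset.sum_ite_eq', Finset.mem_univ, if_true, Complex.real_smul]
  push_cast
  ring

lemma shape1_lemma {d : ℕ} (j : Fin d) (B : ℂ) (m c b : ℝ) (g : Esp d → ℝ)
    (hg : Differentiable ℝ g) (x : Esp d) :
    DifferentiableAt ℝ (fun y : Esp d =>
        B * ((y j : ℝ) : ℂ) * ((g (m⁻¹ • y) : ℝ) : ℂ) * Ph c b y) x ∧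
      sderiv j (fun y : Esp d =>
        B * ((y j : ℝ) : ℂ) * ((g (m⁻¹ • y) : ℝ) : ℂ) * Ph c b y) x
      = B * Ph c b x *
          ( ((g (m⁻¹ • x) : ℝ) : ℂ)
            + ((x j : ℝ) : ℂ) * ((m⁻¹ : ℝ) : ℂ) * ((sderivR j g (m⁻¹ • x) : ℝ) : ℂ)
            + Complex.I * (c : ℂ) * ((x j : ℝ) : ℂ) * ((x j : ℝ) : ℂ) * ((g (m⁻¹ • x) : ℝ) : ℂ) ) := by
  have hyj : HasFDerivAt (fun y : Esp d => ((y j : ℝ) : ℂ))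
      (Complex.ofRealCLM.comp (EuclideanSpace.proj j : Esp d →L[ℝ] ℝ)) x :=
    Complex.ofRealCLM.hasFDerivAt.comp x (EuclideanSpace.proj (𝕜 := ℝ) j).hasFDerivAt
  have hscale : HasFDerivAt (fun y : Esp d => m⁻¹ • y)
      (m⁻¹ • ContinuousLinearMap.id ℝ (Esp d)) x := by
    exact (hasFDerivAt_id x).const_smul m⁻¹
  have hgc : HasFDerivAt (fun y : Esp d => ((g (m⁻¹ • y) : ℝ) : ℂ))
      (Complex.ofRealCLM.comp ((fderiv ℝ g (m⁻¹ • x)).comp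
        (m⁻¹ • ContinuousLinearMap.id ℝ (Esp d)))) x :=
    Complex.ofRealCLM.hasFDerivAt.comp x
      (((hg (m⁻¹ • x)).hasFDerivAt).comp x hscale)
  have h3 := ((hyj.const_mul B).fun_mul hgc).fun_mul (hasFDerivAt_Ph c b x)
  refine ⟨h3.differentiableAt, ?_⟩
  rw [sderiv, h3.fderiv]
  simp only [ContinuousLinearMap.add_apply, ContinuousLinearMap.smul_apply,
    ContinuousLinearMap.comp_apply, ContinuousLinearMap.coe_smul', Pi.smul_apply,
    ContinuousLinearMap.sum_apply, ContinuousLinearMap.id_apply,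
    Complex.ofRealCLM_apply, PiLp.proj_apply, _root_.map_smul]
  rw [sderivR]
  simp only [EuclideanSpace.single_apply, smul_eq_mul, mul_ite, mul_one, mul_zero,
    Finset.sum_ite_eq', Finset.mem_univ, if_true, Complex.real_smul]
  push_cast
  ring

lemma sderiv_add {d : ℕ} (j : Fin d) {f g : Esp d → ℂ} {x : Esp d}
    (hf : DifferentiableAt ℝ f x) (hg : DifferentiableAt ℝ g x) :
    sderiv j (fun y => f y + g y) x = sderiv j f x + sderiv j g x := by
  rw [sderiv, fderiv_fun_add hf hg]; rfl

lemma sderivR_smooth {d : ℕ} (Q : Esp d → ℝ) (hQ : ContDiff ℝ (↑(⊤:ℕ∞)) Q) (j : Fin d) :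
    ContDiff ℝ (↑(⊤:ℕ∞)) (sderivR j Q) := by
  have h := (contDiff_infty_iff_fderiv.mp hQ).2
  exact h.clm_apply contDiff_const

lemma lap_formula {d : ℕ} (A : ℂ) (m c b : ℝ) (Q : Esp d → ℝ)
    (hQ : ContDiff ℝ (↑(⊤:ℕ∞)) Q) (x : Esp d) :
    lap (fun y => A * ((Q (m⁻¹ • y) : ℝ) : ℂ) * Ph c b y) x
      = A * Ph c b x *
        ( ((m⁻¹ : ℝ) : ℂ) ^ 2 * ((lapR Q (m⁻¹ • x) : ℝ) : ℂ)
          + 2 * Complex.I * (c : ℂ) * ((m⁻¹ : ℝ) : ℂ)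
              * (∑ j, ((x j : ℝ) : ℂ) * ((sderivR j Q (m⁻¹ • x) : ℝ) : ℂ))
          + ((Q (m⁻¹ • x) : ℝ) : ℂ)
              * (Complex.I * (c : ℂ) * (d : ℂ) - (c : ℂ) ^ 2 * ((‖x‖ ^ (2:ℕ) : ℝ) : ℂ)) ) := by
  have hQd : Differentiable ℝ Q := hQ.differentiable (by simp)
  rw [lap]
  have step : ∀ j : Fin d, sderiv j (fun y => sderiv j
        (fun z => A * ((Q (m⁻¹ • z) : ℝ) : ℂ) * Ph c b z) y) x
      = (A * ((m⁻¹ : ℝ) : ℂ)) * Ph c b x *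
          ( ((m⁻¹ : ℝ) : ℂ) * ((sderivR j (fun p => sderivR j Q p) (m⁻¹ • x) : ℝ) : ℂ)
            + Complex.I * (c : ℂ) * ((x j : ℝ) : ℂ) * ((sderivR j Q (m⁻¹ • x) : ℝ) : ℂ) )
        + (A * Complex.I * (c : ℂ)) * Ph c b x *
          ( ((Q (m⁻¹ • x) : ℝ) : ℂ)
            + ((x j : ℝ) : ℂ) * ((m⁻¹ : ℝ) : ℂ) * ((sderivR j Q (m⁻¹ • x) : ℝ) : ℂ)
            + Complex.I * (c : ℂ) * ((x j : ℝ) : ℂ) * ((x j : ℝ) : ℂ) * ((Q (m⁻¹ • x) : ℝ) : ℂ) ) := by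
    intro j
    have hrw : (fun y => sderiv j (fun z => A * ((Q (m⁻¹ • z) : ℝ) : ℂ) * Ph c b z) y)
        = fun y => (A * ((m⁻¹ : ℝ) : ℂ)) * ((sderivR j Q (m⁻¹ • y) : ℝ) : ℂ) * Ph c b y
            + (A * Complex.I * (c : ℂ)) * ((y j : ℝ) : ℂ) * ((Q (m⁻¹ • y) : ℝ) : ℂ) * Ph c b y := by
      funext y
      rw [(shape0_lemma j A m c b Q hQd y).2]
      ring
    rw [hrw, sderiv_add j (shape0_lemma j (A * ((m⁻¹:ℝ):ℂ)) m c b (sderivR j Q)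
        ((sderivR_smooth Q hQ j).differentiable (by simp)) x).1
        (shape1_lemma j (A * Complex.I * (c:ℂ)) m c b Q hQd x).1,
      (shape0_lemma j (A * ((m⁻¹:ℝ):ℂ)) m c b (sderivR j Q)
        ((sderivR_smooth Q hQ j).differentiable (by simp)) x).2,
      (shape1_lemma j (A * Complex.I * (c:ℂ)) m c b Q hQd x).2]
  rw [Finset.sum_congr rfl (fun j _ => step j)]
  have h1 : ((lapR Q (m⁻¹ • x) : ℝ) : ℂ)
      = ∑ j, ((sderivR j (fun p => sderivR j Q p) (m⁻¹ • x) : ℝ) : ℂ) := by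
    rw [lapR]; push_cast; rfl
  have h2 : ((‖x‖ ^ (2:ℕ) : ℝ) : ℂ) = ∑ j, ((x j : ℝ) : ℂ) ^ 2 := by
    have : ‖x‖ ^ (2:ℕ) = ∑ j, x j ^ 2 := by
      rw [EuclideanSpace.norm_eq, Real.sq_sqrt (by positivity)]
      simp [_root_.sq_abs]
    rw [this]; push_cast; rfl
  have h3 : (d : ℂ) = ∑ _j : Fin d, (1 : ℂ) := by simp
  rw [h1, h2, h3]
  rw [eq_comm]
  simp only [mul_add, mul_sub, Finset.mul_sum, ← Finset.sum_add_distrib, ← Finset.sum_sub_distrib]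
  apply Finset.sum_congr rfl
  intro j _
  push_cast
  ring_nf
  simp only [Complex.I_sq]
  ring

lemma timederiv {d : ℕ} (Q : Esp d → ℝ) (hQ : ContDiff ℝ (↑(⊤:ℕ∞)) Q)
    (μ ν : ℝ → ℝ) (hμ : Differentiable ℝ μ) (hμ' : Differentiable ℝ (deriv μ))
    (hν : Differentiable ℝ ν)
    (t : ℝ) (ht : 0 < μ t) (x : Esp d) :
    HasDerivAt (fun s => ((μ s ^ (-(d:ℝ)/2) : ℝ) : ℂ) * ((Q ((μ s)⁻¹ • x) : ℝ) : ℂ)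
        * Ph (deriv μ s / μ s) (ν s / μ s) x)
      ( (((deriv μ t * (-(d:ℝ)/2) * μ t ^ (-(d:ℝ)/2 - 1) : ℝ) : ℂ) * ((Q ((μ t)⁻¹ • x) : ℝ) : ℂ)
          + ((μ t ^ (-(d:ℝ)/2) : ℝ) : ℂ)
            * ((fderiv ℝ Q ((μ t)⁻¹ • x) ((-(deriv μ t) / μ t ^ 2) • x) : ℝ) : ℂ))
          * Ph (deriv μ t / μ t) (ν t / μ t) x
        + ((μ t ^ (-(d:ℝ)/2) : ℝ) : ℂ) * ((Q ((μ t)⁻¹ • x) : ℝ) : ℂ)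
          * (Ph (deriv μ t / μ t) (ν t / μ t) x
            * (Complex.I * (((deriv (deriv μ) t * μ t - deriv μ t * deriv μ t) / μ t ^ 2 : ℝ) : ℂ)
                * ((‖x‖ ^ (2:ℕ) : ℝ) : ℂ) / 2
              - Complex.I * (((deriv ν t * μ t - ν t * deriv μ t) / μ t ^ 2 : ℝ) : ℂ))) ) t := by
  have h1c : HasDerivAt (fun s => ((μ s ^ (-(d:ℝ)/2) : ℝ) : ℂ))
      ((deriv μ t * (-(d:ℝ)/2) * μ t ^ (-(d:ℝ)/2 - 1) : ℝ) : ℂ) t :=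
    (((hμ t).hasDerivAt.rpow_const (Or.inl ht.ne')).ofReal_comp)
  have hinv : HasDerivAt (fun s => (μ s)⁻¹) (-(deriv μ t) / μ t ^ 2) t :=
    ((hμ t).hasDerivAt).inv ht.ne'
  have hsm : HasDerivAt (fun s => (μ s)⁻¹ • x) ((-(deriv μ t) / μ t ^ 2) • x) t :=
    hinv.smul_const x
  have h2c : HasDerivAt (fun s => ((Q ((μ s)⁻¹ • x) : ℝ) : ℂ))
      ((fderiv ℝ Q ((μ t)⁻¹ • x) ((-(deriv μ t) / μ t ^ 2) • x) : ℝ) : ℂ) t :=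
    (((hQ.differentiable (by simp) ((μ t)⁻¹ • x)).hasFDerivAt.comp_hasDerivAt
      t hsm).ofReal_comp)
  have hcR : HasDerivAt (fun s => deriv μ s / μ s)
      ((deriv (deriv μ) t * μ t - deriv μ t * deriv μ t) / μ t ^ 2) t :=
    ((hμ' t).hasDerivAt).div ((hμ t).hasDerivAt) ht.ne'
  have hbR : HasDerivAt (fun s => ν s / μ s)
      ((deriv ν t * μ t - ν t * deriv μ t) / μ t ^ 2) t :=
    ((hν t).hasDerivAt).div ((hμ t).hasDerivAt) ht.ne'
  have hph : HasDerivAt (fun s => Ph (deriv μ s / μ s) (ν s / μ s) x (d := d))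
      (Ph (deriv μ t / μ t) (ν t / μ t) x
        * (Complex.I * (((deriv (deriv μ) t * μ t - deriv μ t * deriv μ t) / μ t ^ 2 : ℝ) : ℂ)
            * ((‖x‖ ^ (2:ℕ) : ℝ) : ℂ) / 2
          - Complex.I * (((deriv ν t * μ t - ν t * deriv μ t) / μ t ^ 2 : ℝ) : ℂ))) t := by
    exact ((((hcR.ofReal_comp.const_mul Complex.I).mul_const
      ((‖x‖ ^ (2:ℕ) : ℝ) : ℂ)).div_const 2).sub
      (hbR.ofReal_comp.const_mul Complex.I)).cexp
  exact (h1c.mul h2c).mul hph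

lemma wronskian (Ω : ℝ → ℝ) (μ ν : ℝ → ℝ)
    (hμ : Differentiable ℝ μ) (hμ' : Differentiable ℝ (deriv μ))
    (hμODE : ∀ t, deriv (deriv μ) t + Ω t * μ t = 0)
    (hμ0 : μ 0 = 0) (hμ'0 : deriv μ 0 = 1)
    (hν : Differentiable ℝ ν) (hν' : Differentiable ℝ (deriv ν))
    (hνODE : ∀ t, deriv (deriv ν) t + Ω t * ν t = 0)
    (hν0 : ν 0 = 1) (hν'0 : deriv ν 0 = 0) (t : ℝ) :
    deriv ν t * μ t - ν t * deriv μ t = -1 := by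
  have hWd : Differentiable ℝ (fun r => deriv ν r * μ r - ν r * deriv μ r) :=
    (hν'.mul hμ).sub (hν.mul hμ')
  have hW : ∀ s, deriv (fun r => deriv ν r * μ r - ν r * deriv μ r) s = 0 := by
    intro s
    rw [deriv_fun_sub ((hν' s).fun_mul (hμ s)) ((hν s).fun_mul (hμ' s)),
      deriv_fun_mul (hν' s) (hμ s), deriv_fun_mul (hν s) (hμ' s)]
    linear_combination μ s * (hνODE s) - ν s * (hμODE s)
  have := is_const_of_deriv_eq_zero hWd hW t 0
  rw [this, hμ0, hμ'0, hν0, hν'0]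
  ring


lemma esp_eq_sum {d : ℕ} (x : Esp d) : x = ∑ j, x j • EuclideanSpace.single j (1:ℝ) := by
  ext i
  rw [WithLp.ofLp_sum, Finset.sum_apply]
  simp [EuclideanSpace.single_apply, PiLp.smul_apply]

lemma clm_apply_sum {d : ℕ} {F : Type*} [NormedAddCommGroup F] [NormedSpace ℝ F]
    (L : Esp d →L[ℝ] F) (x : Esp d) :
    L x = ∑ j, x j • L (EuclideanSpace.single j (1:ℝ)) := by
  conv_lhs => rw [esp_eq_sum x]
  rw [map_sum]
  simp

lemma Ph_norm {d : ℕ} (c b : ℝ) (x : Esp d) : ‖Ph c b x‖ = 1 := by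
  have h : Complex.I * (c:ℂ) * ((‖x‖ ^ (2:ℕ) : ℝ) : ℂ) / 2 - Complex.I * (b:ℂ)
      = ((c * ‖x‖ ^ (2:ℕ) / 2 - b : ℝ) : ℂ) * Complex.I := by push_cast; ring
  rw [Ph, h, Complex.norm_exp_ofReal_mul_I]

set_option maxHeartbeats 1000000

/-- Explicit blow-up solution for the focusing `L²`-critical NLS with a time-dependent
isotropic harmonic potential: with `μ, ν` the fundamental solutions at `0` of
`y'' + Ωy = 0` and `Q > 0` the ground state, the function
`u(t,x) = μ(t)^{−d/2} Q(x/μ(t)) e^{i(μ'(t)/μ(t))|x|²/2 − iν(t)/μ(t)}` solves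
`i∂ₜu + ½Δu = ½Ω(t)|x|²u − |u|^{4/d}u` wherever `μ(t) > 0`. -/
theorem explicit_blowup_harmonic
    (d : ℕ) (hd : 1 ≤ d)
    (Ω : ℝ → ℝ) (hΩ : Continuous Ω)
    (μ ν : ℝ → ℝ)
    (hμ : Differentiable ℝ μ) (hμ' : Differentiable ℝ (deriv μ))
    (hμODE : ∀ t, deriv (deriv μ) t + Ω t * μ t = 0)
    (hμ0 : μ 0 = 0) (hμ'0 : deriv μ 0 = 1)
    (hν : Differentiable ℝ ν) (hν' : Differentiable ℝ (deriv ν))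
    (hνODE : ∀ t, deriv (deriv ν) t + Ω t * ν t = 0)
    (hν0 : ν 0 = 1) (hν'0 : deriv ν 0 = 0)
    (Q : Esp d → ℝ) (hQ : ContDiff ℝ (⊤ : ℕ∞) Q) (hQpos : ∀ x, 0 < Q x)
    (hQeq : ∀ x : Esp d,
      -(1 / 2) * lapR Q x + Q x = (Q x) ^ (1 + 4 / (d : ℝ)))
    (u : ℝ → Esp d → ℂ)
    (hu : ∀ (t : ℝ) (x : Esp d), 0 < μ t →
      u t x = (((μ t ^ (-(d : ℝ) / 2) : ℝ)) : ℂ) * ((Q ((μ t)⁻¹ • x) : ℝ) : ℂ)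
        * Complex.exp (Complex.I * ((deriv μ t / μ t : ℝ) : ℂ)
              * ((‖x‖ ^ (2:ℕ) : ℝ) : ℂ) / 2
            - Complex.I * ((ν t / μ t : ℝ) : ℂ))) :
    ∀ (t : ℝ), 0 < μ t → ∀ (x : Esp d),
      Complex.I * deriv (fun s => u s x) t + (1 / 2) * lap (u t) x
        = (1 / 2) * ((Ω t : ℝ) : ℂ) * ((‖x‖ ^ (2:ℕ) : ℝ) : ℂ) * u t x
          - (((‖u t x‖ ^ (2:ℕ)) ^ (2 / (d : ℝ)) : ℝ) : ℂ) * u t x := by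
  intro t ht x
  have hd0 : (d:ℝ) ≠ 0 := Nat.cast_ne_zero.mpr (by omega)
  have hQtop : ContDiff ℝ (↑(⊤:ℕ∞)) Q := hQ.of_le (by simp)
  have hut : u t = fun y => ((μ t ^ (-(d:ℝ)/2) : ℝ) : ℂ) * ((Q ((μ t)⁻¹ • y) : ℝ) : ℂ)
      * Ph (deriv μ t / μ t) (ν t / μ t) y := funext fun y => hu t y ht
  have hev : ∀ᶠ s in nhds t, 0 < μ s :=
    (isOpen_lt continuous_const hμ.continuous).mem_nhds ht
  have heq : (fun s => u s x) =ᶠ[nhds t] fun s =>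
      ((μ s ^ (-(d:ℝ)/2) : ℝ) : ℂ) * ((Q ((μ s)⁻¹ • x) : ℝ) : ℂ)
        * Ph (deriv μ s / μ s) (ν s / μ s) x := by
    filter_upwards [hev] with s hs
    exact hu s x hs
  have hD := timederiv Q hQtop μ ν hμ hμ' hν t ht x
  rw [heq.deriv_eq, hD.deriv]
  simp only [hut]
  rw [lap_formula]
  · -- norms and algebra
    have hnormval : ‖((μ t ^ (-(d:ℝ)/2) : ℝ) : ℂ) * ((Q ((μ t)⁻¹ • x) : ℝ) : ℂ)
        * Ph (deriv μ t / μ t) (ν t / μ t) x‖ = μ t ^ (-(d:ℝ)/2) * Q ((μ t)⁻¹ • x) := by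
      rw [norm_mul, norm_mul, Ph_norm, mul_one, Complex.norm_real, Complex.norm_real,
        Real.norm_eq_abs, Real.norm_eq_abs, _root_.abs_of_nonneg (Real.rpow_nonneg ht.le _),
        _root_.abs_of_pos (hQpos _)]
    rw [hnormval]
    have hnorm : ((μ t ^ (-(d:ℝ)/2) * Q ((μ t)⁻¹ • x)) ^ (2:ℕ)) ^ (2/(d:ℝ))
        = ((μ t)^(2:ℕ))⁻¹ * Q ((μ t)⁻¹ • x) ^ ((4:ℝ)/(d:ℝ)) := by
      have hz : (0:ℝ) ≤ μ t ^ (-(d:ℝ)/2) * Q ((μ t)⁻¹ • x) :=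
        mul_nonneg (Real.rpow_nonneg ht.le _) (hQpos _).le
      rw [← Real.rpow_natCast (μ t ^ (-(d:ℝ)/2) * Q ((μ t)⁻¹ • x)) 2,
        ← Real.rpow_mul hz]
      have he : ((2:ℕ):ℝ) * (2/(d:ℝ)) = 4/(d:ℝ) := by push_cast; ring
      rw [he, Real.mul_rpow (Real.rpow_nonneg ht.le _) (hQpos _).le,
        ← Real.rpow_mul ht.le]
      have he2 : (-(d:ℝ)/2) * (4/(d:ℝ)) = -2 := by field_simp; ring
      rw [he2]
      have he3 : μ t ^ (-2:ℝ) = ((μ t)^(2:ℕ))⁻¹ := by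
        rw [Real.rpow_neg ht.le, show ((2:ℝ)) = ((2:ℕ):ℝ) by norm_num,
          Real.rpow_natCast]
      rw [he3]
    rw [hnorm]
    have hfd : fderiv ℝ Q ((μ t)⁻¹ • x) ((-(deriv μ t) / μ t ^ 2) • x)
        = (-(deriv μ t) / μ t ^ 2) * ∑ j, x j * sderivR j Q ((μ t)⁻¹ • x) := by
      rw [_root_.map_smul, clm_apply_sum (fderiv ℝ Q ((μ t)⁻¹ • x)) x]
      simp only [smul_eq_mul, sderivR]
    rw [hfd]
    have hsumc : (∑ j, ((x j :ℝ):ℂ) * ((sderivR j Q ((μ t)⁻¹ • x) :ℝ):ℂ))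
        = ((∑ j, x j * sderivR j Q ((μ t)⁻¹ • x) : ℝ):ℂ) := by push_cast; rfl
    rw [hsumc]
    have hsub : μ t ^ (-(d:ℝ)/2 - 1) = μ t ^ (-(d:ℝ)/2) * (μ t)⁻¹ := by
      rw [Real.rpow_sub ht, Real.rpow_one]
      ring
    rw [hsub]
    have hμ'' : deriv (deriv μ) t = -(Ω t * μ t) := by linarith [hμODE t]
    have hw : deriv ν t * μ t - ν t * deriv μ t = -1 :=
      wronskian Ω μ ν hμ hμ' hμODE hμ0 hμ'0 hν hν' hνODE hν0 hν'0 t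
    have hlapQ : lapR Q ((μ t)⁻¹ • x)
        = 2 * Q ((μ t)⁻¹ • x) - 2 * (Q ((μ t)⁻¹ • x) * Q ((μ t)⁻¹ • x) ^ ((4:ℝ)/(d:ℝ))) := by
      have h := hQeq ((μ t)⁻¹ • x)
      rw [Real.rpow_add (hQpos _) 1 (4/(d:ℝ)), Real.rpow_one] at h
      linarith
    rw [hμ'', hw, hlapQ]
    generalize (∑ j, x j * sderivR j Q ((μ t)⁻¹ • x)) = S
    generalize Q ((μ t)⁻¹ • x) ^ ((4:ℝ)/(d:ℝ)) = K
    generalize Q ((μ t)⁻¹ • x) = q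
    generalize μ t ^ (-(d:ℝ)/2) = a
    generalize Ph (deriv μ t / μ t) (ν t / μ t) x = P
    generalize ‖x‖ ^ (2:ℕ) = r
    set m := μ t with hmdef
    set m1 := deriv μ t with hm1def
    set w := Ω t with hwdef
    have hm : (m:ℂ) ≠ 0 := Complex.ofReal_ne_zero.mpr ht.ne'
    clear_value m m1 w
    clear hD heq hut hev hnormval hu hQeq hlapQ hfd hw hsub hsumc hnorm hμODE hνODE hmdef hm1def hwdef
    push_cast
    field_simp
    ring_nf
    simp only [Complex.I_sq]
    ring
  · exact hQtop
end
end

section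
/- Blow-up of the gradient norm of the explicit solution. Let d ≥ 1, let Ω : ℝ → ℝ be continuous, and let μ, ν be fundamental solutions at 0 of y'' + Ω y = 0. Let Q : E → ℝ be a Schwartz function with ∫_E |∇Q(x)|² dx > 0, and for t with μ(t) > 0 define u(t,x) = μ(t)^{−d/2} Q(x/μ(t)) · exp( i (μ'(t)/μ(t)) |x|²/2 − i ν(t)/μ(t) ). Then there exists T > 0 such that μ(t) > 0 for all t ∈ (0,T], and for all such t: ∫_E |∇_x u(t,x)|² dx = μ(t)^{−2} ∫_E |∇Q(x)|² dx + μ'(t)² ∫_E |x|² Q(x)² dx; consequently the L² norm of ∇_x u(t,·) tends to +∞ as t → 0⁺. -/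
noncomputable section

open MeasureTheory Real Complex Filter

/-! Write `u(t) = A e^{iφ}` with `A = μ^{-d/2} Q(x/μ)` and `φ = (μ'/μ)|x|²/2 - ν/μ` real. Since the
phase factor has modulus one, `|∂ⱼu|² = (∂ⱼA)² + A² (∂ⱼφ)²`, and the substitution `x = μ y`
turns the two integrals into `μ^{-2} ∫|∇Q|²` and `μ'² ∫|y|²Q²`. As `μ(0) = 0` and `μ'(0) = 1`,
`μ(t) → 0⁺` as `t → 0⁺`, so the first term blows up. -/

open scoped Topology LineDeriv SchwartzMap

theorem norm_sq_fderiv_ofReal_mul_exp {E : Type*} [NormedAddCommGroup E] [NormedSpace ℝ E]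
    {f φ : E → ℝ} {x : E} (hf : DifferentiableAt ℝ f x) (hφ : DifferentiableAt ℝ φ x) (v : E) :
    ‖fderiv ℝ (fun y => (f y : ℂ) * cexp (φ y * I)) x v‖ ^ 2
      = fderiv ℝ f x v ^ 2 + (f x * fderiv ℝ φ x v) ^ 2 := by
  have hf' : HasFDerivAt (fun y => (f y : ℂ)) (ofRealCLM.comp (fderiv ℝ f x)) x :=
    ofRealCLM.hasFDerivAt.comp x hf.hasFDerivAt
  have hφ' : HasFDerivAt (fun y => (φ y : ℂ) * I) (I • ofRealCLM.comp (fderiv ℝ φ x)) x :=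
    (ofRealCLM.hasFDerivAt.comp x hφ.hasFDerivAt).mul_const I
  have hvalue : fderiv ℝ (fun y => (f y : ℂ) * cexp (φ y * I)) x v
      = cexp (φ x * I) * (fderiv ℝ f x v + ((f x * fderiv ℝ φ x v : ℝ) : ℂ) * I) := by
    rw [show (fun y => (f y : ℂ) * cexp (φ y * I)) = (fun y => (f y : ℂ)) * fun y => cexp (φ y * I)
      from rfl, (hf'.mul hφ'.cexp).fderiv]
    simp only [add_apply, smul_apply,
      ContinuousLinearMap.comp_apply, ofRealCLM_apply, smul_eq_mul, ofReal_mul]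
    ring
  rw [hvalue, norm_mul, norm_exp_ofReal_mul_I, one_mul, Complex.sq_norm, normSq_add_mul_I]

theorem fderiv_const_mul_comp_smul_apply {E : Type*} [NormedAddCommGroup E] [NormedSpace ℝ E]
    {g : E → ℝ} (C c : ℝ) {x : E} (hg : DifferentiableAt ℝ g (c • x)) (v : E) :
    fderiv ℝ (fun y => C * g (c • y)) x v = C * (c * fderiv ℝ g (c • x) v) := by
  have h : HasFDerivAt (fun y => C * g (c • y)) (C • (fderiv ℝ g (c • x)).comp (c • .id ℝ E)) x :=
    (hg.hasFDerivAt.comp x ((hasFDerivAt_id x).const_smul c)).const_mul C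
  simp [h.fderiv]

theorem fderiv_const_mul_norm_sq_sub_apply {F : Type*} [NormedAddCommGroup F]
    [InnerProductSpace ℝ F] (c b : ℝ) (x v : F) :
    fderiv ℝ (fun y => c * ‖y‖ ^ 2 - b) x v = 2 * c * inner ℝ x v := by
  rw [(((hasStrictFDerivAt_norm_sq x).hasFDerivAt.const_mul c).sub_const b).fderiv]
  simp only [smul_apply, coe_innerSL_apply, nsmul_eq_mul, Nat.cast_ofNat,
    smul_eq_mul]
  ring

theorem SchwartzMap.integrable_norm_sq_mul_sq {D : Type*} [NormedAddCommGroup D]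
    [NormedSpace ℝ D] [MeasurableSpace D] [BorelSpace D] [SecondCountableTopology D]
    (μ : Measure D) [μ.HasTemperateGrowth] (Q : 𝓢(D, ℝ)) :
    Integrable (fun x => ‖x‖ ^ 2 * Q x ^ 2) μ := by
  refine ((Q.integrable_pow_mul μ 2).mul_bdd Q.continuous.norm.aestronglyMeasurable
    (ae_of_all _ fun x => (norm_norm (Q x)).trans_le (Q.norm_le_seminorm ℝ x))).congr
    (ae_of_all _ fun x => ?_)
  simp only [Real.norm_eq_abs]
  rw [mul_assoc, ← sq, sq_abs]

section LensProfile

variable {d : ℕ}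

-- Spelled exactly as in the hypothesis on `u`; `lensProfile_eq_ofReal_mul_exp` is the usable form.
def lensProfile (Q : 𝓢(Esp d, ℝ)) (m a b : ℝ) (y : Esp d) : ℂ :=
  ((m ^ (-(d : ℝ) / 2) : ℝ) : ℂ) * ((Q (m⁻¹ • y) : ℝ) : ℂ)
    * Complex.exp (Complex.I * ((a / m : ℝ) : ℂ) * ((‖y‖ ^ (2:ℕ) : ℝ) : ℂ) / 2
      - Complex.I * ((b : ℝ) : ℂ))

theorem lensProfile_eq_ofReal_mul_exp (Q : 𝓢(Esp d, ℝ)) (m a b : ℝ) :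
    lensProfile Q m a b = fun y => ((m ^ (-(d : ℝ) / 2) * Q (m⁻¹ • y) : ℝ) : ℂ)
      * cexp ((a / m / 2 * ‖y‖ ^ 2 - b : ℝ) * I) := by
  ext y
  simp only [lensProfile]
  push_cast
  ring_nf

theorem norm_sq_sderiv_lensProfile (Q : 𝓢(Esp d, ℝ)) (m a b : ℝ) (x : Esp d) (j : Fin d) :
    ‖sderiv j (lensProfile Q m a b) x‖ ^ 2
      = (m ^ (-(d : ℝ) / 2)) ^ 2
        * (m⁻¹ ^ 2 * sderivR j Q (m⁻¹ • x) ^ 2 + (a / m) ^ 2 * Q (m⁻¹ • x) ^ 2 * x j ^ 2) := by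
  rw [sderiv, lensProfile_eq_ofReal_mul_exp,
    norm_sq_fderiv_ofReal_mul_exp (by fun_prop)
      (((hasStrictFDerivAt_norm_sq x).differentiableAt.const_mul _).sub_const _),
    fderiv_const_mul_comp_smul_apply _ _ Q.differentiableAt, fderiv_const_mul_norm_sq_sub_apply,
    EuclideanSpace.inner_single_right, sderivR]
  simp only [conj_trivial, one_mul]
  ring

theorem sum_norm_sq_sderiv_lensProfile (Q : 𝓢(Esp d, ℝ)) {m : ℝ} (hm : 0 < m) (a b : ℝ)
    (x : Esp d) :
    ∑ j, ‖sderiv j (lensProfile Q m a b) x‖ ^ 2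
      = m ^ (-(d : ℝ)) * ((m ^ 2)⁻¹ * ∑ j, sderivR j Q (m⁻¹ • x) ^ 2
        + a ^ 2 * (‖m⁻¹ • x‖ ^ 2 * Q (m⁻¹ • x) ^ 2)) := by
  have hamplitude : (m ^ (-(d : ℝ) / 2)) ^ 2 = m ^ (-(d : ℝ)) := by
    rw [← Real.rpow_natCast, ← Real.rpow_mul hm.le]
    norm_num
  simp_rw [norm_sq_sderiv_lensProfile, ← Finset.mul_sum, Finset.sum_add_distrib, ← Finset.mul_sum,
    hamplitude, norm_smul, mul_pow, EuclideanSpace.real_norm_sq_eq, norm_inv,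
    Real.norm_of_nonneg hm.le]
  field_simp

theorem integrable_sum_sderivR_sq (Q : 𝓢(Esp d, ℝ)) :
    Integrable (fun x => ∑ j, sderivR j Q x ^ 2) :=
  integrable_finsetSum _ fun j _ =>
    ((∂_{EuclideanSpace.single j (1 : ℝ)} Q).memLp 2 volume).integrable_sq

theorem integral_sum_norm_sq_sderiv_lensProfile (Q : 𝓢(Esp d, ℝ)) {m : ℝ} (hm : 0 < m)
    (a b : ℝ) :
    ∫ x, ∑ j, ‖sderiv j (lensProfile Q m a b) x‖ ^ 2
      = (m ^ 2)⁻¹ * (∫ x, ∑ j, sderivR j Q x ^ 2) + a ^ 2 * ∫ x, ‖x‖ ^ 2 * Q x ^ 2 := by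
  simp_rw [sum_norm_sq_sderiv_lensProfile Q hm]
  rw [Measure.integral_comp_inv_smul_of_nonneg volume
      (fun y => m ^ (-(d : ℝ)) * ((m ^ 2)⁻¹ * ∑ j, sderivR j Q y ^ 2 + a ^ 2 * (‖y‖ ^ 2 * Q y ^ 2)))
      hm.le,
    integral_const_mul, integral_add ((integrable_sum_sderivR_sq Q).const_mul _)
      ((Q.integrable_norm_sq_mul_sq volume).const_mul _),
    integral_const_mul, integral_const_mul, finrank_euclideanSpace_fin, smul_eq_mul, ← mul_assoc,
    ← Real.rpow_natCast, ← Real.rpow_add hm, add_neg_cancel, Real.rpow_zero, one_mul]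

end LensProfile

theorem exists_Ioc_pos_of_deriv_pos {f : ℝ → ℝ} {a : ℝ} (hfa : f a = 0) (hf' : 0 < deriv f a) :
    ∃ T > a, ∀ t ∈ Set.Ioc a T, 0 < f t := by
  have hpos : ∀ᶠ t in 𝓝[>] a, 0 < f t := by
    filter_upwards [nhdsWithin_le_nhds (eventually_nhdsWithin_sign_eq_of_deriv_pos hf' hfa),
      self_mem_nhdsWithin] with t hsign hat
    rw [sign_pos (sub_pos.2 hat)] at hsign
    exact sign_eq_one_iff.1 hsign
  exact mem_nhdsGT_iff_exists_Ioc_subset.1 hpos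

theorem tendsto_sqrt_inv_sq_mul_add_atTop {α : Type*} {l : Filter α} {m b : α → ℝ} {A : ℝ}
    (hm : Tendsto m l (𝓝[>] 0)) (hA : 0 < A) (hb : ∀ᶠ t in l, 0 ≤ b t) :
    Tendsto (fun t => √((m t ^ 2)⁻¹ * A + b t)) l atTop := by
  refine tendsto_atTop_mono' l ?_ ((tendsto_inv_nhdsGT_zero.comp hm).const_mul_atTop
    (Real.sqrt_pos.2 hA))
  filter_upwards [hb, hm.eventually self_mem_nhdsWithin] with t hbt (hmt : 0 < m t)
  calc √A * (m t)⁻¹ = √((m t ^ 2)⁻¹ * A) := by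
        rw [Real.sqrt_mul (by positivity), Real.sqrt_inv, Real.sqrt_sq hmt.le, mul_comm]
    _ ≤ √((m t ^ 2)⁻¹ * A + b t) := Real.sqrt_le_sqrt (le_add_of_nonneg_right hbt)

theorem gradient_blowup_general
    (d : ℕ)
    (μ ν : ℝ → ℝ)
    (hμ0 : μ 0 = 0) (hμ'0 : deriv μ 0 = 1)
    (Q : SchwartzMap (Esp d) ℝ)
    (hQgrad : 0 < ∫ x : Esp d, ∑ j, (sderivR j (⇑Q) x) ^ (2:ℕ))
    (u : ℝ → Esp d → ℂ)
    (hu : ∀ (t : ℝ) (x : Esp d), 0 < μ t →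
      u t x = (((μ t ^ (-(d : ℝ) / 2) : ℝ)) : ℂ) * ((Q ((μ t)⁻¹ • x) : ℝ) : ℂ)
        * Complex.exp (Complex.I * ((deriv μ t / μ t : ℝ) : ℂ)
              * ((‖x‖ ^ (2:ℕ) : ℝ) : ℂ) / 2
            - Complex.I * ((ν t / μ t : ℝ) : ℂ))) :
    ∃ T > (0:ℝ), (∀ t ∈ Set.Ioc (0:ℝ) T, 0 < μ t) ∧
      (∀ t ∈ Set.Ioc (0:ℝ) T,
        (∫ x : Esp d, ∑ j, ‖sderiv j (u t) x‖ ^ (2:ℕ))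
          = (μ t ^ (2:ℕ))⁻¹ * (∫ x : Esp d, ∑ j, (sderivR j (⇑Q) x) ^ (2:ℕ))
            + (deriv μ t) ^ (2:ℕ) * ∫ x : Esp d, ‖x‖ ^ (2:ℕ) * (Q x) ^ (2:ℕ)) ∧
      Tendsto (fun t => Real.sqrt (∫ x : Esp d, ∑ j, ‖sderiv j (u t) x‖ ^ (2:ℕ)))
        (nhdsWithin 0 (Set.Ioi 0)) atTop := by
  obtain ⟨T, hT, hpos⟩ := exists_Ioc_pos_of_deriv_pos hμ0 (hμ'0 ▸ one_pos)
  have hident : ∀ t ∈ Set.Ioc (0:ℝ) T, ∫ x, ∑ j, ‖sderiv j (u t) x‖ ^ 2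
      = (μ t ^ 2)⁻¹ * (∫ x, ∑ j, sderivR j Q x ^ 2) + deriv μ t ^ 2 * ∫ x, ‖x‖ ^ 2 * Q x ^ 2 := by
    intro t ht
    rw [show u t = lensProfile Q (μ t) (deriv μ t) (ν t / μ t) from
      funext fun x => hu t x (hpos t ht)]
    exact integral_sum_norm_sq_sderiv_lensProfile Q (hpos t ht) _ _
  refine ⟨T, hT, hpos, hident, ?_⟩
  have hμ_cont : Tendsto μ (𝓝 0) (𝓝 (μ 0)) :=
    (differentiableAt_of_deriv_ne_zero (hμ'0 ▸ one_ne_zero)).continuousAt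
  rw [hμ0] at hμ_cont
  have hμ_lim : Tendsto μ (𝓝[>] 0) (𝓝[>] 0) :=
    tendsto_nhdsWithin_of_tendsto_nhds_of_eventually_within μ
      (hμ_cont.mono_left nhdsWithin_le_nhds)
      (mem_of_superset (Ioc_mem_nhdsGT hT) hpos)
  have hweight_nonneg : 0 ≤ ∫ x : Esp d, ‖x‖ ^ 2 * Q x ^ 2 :=
    integral_nonneg fun x => by positivity
  refine (tendsto_sqrt_inv_sq_mul_add_atTop (b := fun t => deriv μ t ^ 2 * _) hμ_lim hQgrad
    (.of_forall fun t => mul_nonneg (sq_nonneg _) hweight_nonneg)).congr' ?_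
  filter_upwards [Ioc_mem_nhdsGT hT] with t ht
  rw [hident t ht]

/-- Blow-up of the gradient norm of the explicit solution
`u(t,x) = μ(t)^{−d/2} Q(x/μ(t)) e^{i(μ'(t)/μ(t))|x|²/2 − iν(t)/μ(t)}`:
on a right neighborhood `(0, T]` of `0`, `μ > 0`, the squared `L²` norm of `∇ₓu(t,·)`
equals `μ(t)^{−2} ∫|∇Q|² + μ'(t)² ∫|x|²Q²`, and the `L²` norm of the gradient
tends to `+∞` as `t → 0⁺`. -/
theorem gradient_blowup
    (d : ℕ) (hd : 1 ≤ d)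
    (Ω : ℝ → ℝ) (hΩ : Continuous Ω)
    (μ ν : ℝ → ℝ)
    (hμ : Differentiable ℝ μ) (hμ' : Differentiable ℝ (deriv μ))
    (hμODE : ∀ t, deriv (deriv μ) t + Ω t * μ t = 0)
    (hμ0 : μ 0 = 0) (hμ'0 : deriv μ 0 = 1)
    (hν : Differentiable ℝ ν) (hν' : Differentiable ℝ (deriv ν))
    (hνODE : ∀ t, deriv (deriv ν) t + Ω t * ν t = 0)
    (hν0 : ν 0 = 1) (hν'0 : deriv ν 0 = 0)
    (Q : SchwartzMap (Esp d) ℝ)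
    (hQgrad : 0 < ∫ x : Esp d, ∑ j, (sderivR j (⇑Q) x) ^ (2:ℕ))
    (u : ℝ → Esp d → ℂ)
    (hu : ∀ (t : ℝ) (x : Esp d), 0 < μ t →
      u t x = (((μ t ^ (-(d : ℝ) / 2) : ℝ)) : ℂ) * ((Q ((μ t)⁻¹ • x) : ℝ) : ℂ)
        * Complex.exp (Complex.I * ((deriv μ t / μ t : ℝ) : ℂ)
              * ((‖x‖ ^ (2:ℕ) : ℝ) : ℂ) / 2
            - Complex.I * ((ν t / μ t : ℝ) : ℂ))) :
    ∃ T > (0:ℝ), (∀ t ∈ Set.Ioc (0:ℝ) T, 0 < μ t) ∧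
      (∀ t ∈ Set.Ioc (0:ℝ) T,
        (∫ x : Esp d, ∑ j, ‖sderiv j (u t) x‖ ^ (2:ℕ))
          = (μ t ^ (2:ℕ))⁻¹ * (∫ x : Esp d, ∑ j, (sderivR j (⇑Q) x) ^ (2:ℕ))
            + (deriv μ t) ^ (2:ℕ) * ∫ x : Esp d, ‖x‖ ^ (2:ℕ) * (Q x) ^ (2:ℕ)) ∧
      Tendsto (fun t => Real.sqrt (∫ x : Esp d, ∑ j, ‖sderiv j (u t) x‖ ^ (2:ℕ)))
        (nhdsWithin 0 (Set.Ioi 0)) atTop :=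
  gradient_blowup_general d μ ν hμ0 hμ'0 Q hQgrad u hu
end
end
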